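/- arXiv:2201.10144 — 6 statements merged into one kernel-verified Lean document; each statement's English description precedes it below -/
import Mathlib

section
/- For all x, y ∈ Y with x < y such that the first return time R is constant on the interval [x, y], the induced map satisfies |F(y) − F(x)| ≥ 2 (y − x). -/
open MeasureTheory Set

/-- The interval map `T` of the example: `T(x) = x (1 + c / |log x|^β)` on `(0, 1/2]`
with `β = 1/γ - 1`, `c = (log 2)^β`, `T(x) = 2x - 1` on `(1/2, 1]`, and `T(0) = 0`. -/
noncomputable def Tmap (γ : ℝ) (x : ℝ) : ℝ :=
  if x ≤ 0 then 0
  else if x ≤ 1 / 2 then x * (1 + (Real.log 2) ^ (1 / γ - 1) / |Real.log x| ^ (1 / γ - 1))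
  else 2 * x - 1

/-- The first return time to the basis `Y = (1/2, 1]`. -/
noncomputable def retTime (γ : ℝ) (x : ℝ) : ℕ :=
  sInf {k : ℕ | 1 ≤ k ∧ (Tmap γ)^[k] x ∈ Set.Ioc (1 / 2 : ℝ) 1}

/-- The induced map `F(x) = T^{R(x)}(x)` on `Y = (1/2, 1]`. -/
noncomputable def indMap (γ : ℝ) (x : ℝ) : ℝ :=
  (Tmap γ)^[retTime γ x] x

namespace StmtAux

noncomputable def q (γ : ℝ) (z : ℝ) : ℝ :=
  (Real.log 2) ^ (1 / γ - 1) / |Real.log z| ^ (1 / γ - 1)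

variable {γ : ℝ}

lemma beta_nonneg (hγ0 : 0 < γ) (hγ1 : γ ≤ 1) : 0 ≤ 1 / γ - 1 := by
  have h : 1 ≤ 1 / γ := by rw [le_div_iff₀ hγ0]; linarith
  linarith

lemma abs_log_pos {z : ℝ} (hz : z ∈ Ioc (0:ℝ) (1/2)) : 0 < |Real.log z| := by
  have : Real.log z < 0 := Real.log_neg hz.1 (by linarith [hz.2])
  rw [abs_of_neg this]; linarith

lemma log_two_le_abs_log {z : ℝ} (hz : z ∈ Ioc (0:ℝ) (1/2)) :
    Real.log 2 ≤ |Real.log z| := by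
  have hlt : Real.log z < 0 := Real.log_neg hz.1 (by linarith [hz.2])
  have h1 : Real.log z ≤ Real.log (1/2) := Real.log_le_log hz.1 hz.2
  have h2 : Real.log (1/2) = - Real.log 2 := by
    rw [one_div, Real.log_inv]
  rw [abs_of_neg hlt]; linarith

lemma q_pos (hγ0 : 0 < γ) (hγ1 : γ ≤ 1) {z : ℝ} (hz : z ∈ Ioc (0:ℝ) (1/2)) :
    0 < q γ z := by
  apply div_pos
  · exact Real.rpow_pos_of_pos (Real.log_pos (by norm_num)) _
  · exact Real.rpow_pos_of_pos (abs_log_pos hz) _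

lemma q_le_one (hγ0 : 0 < γ) (hγ1 : γ ≤ 1) {z : ℝ} (hz : z ∈ Ioc (0:ℝ) (1/2)) :
    q γ z ≤ 1 := by
  rw [q, div_le_one (Real.rpow_pos_of_pos (abs_log_pos hz) _)]
  exact Real.rpow_le_rpow (Real.log_nonneg (by norm_num)) (log_two_le_abs_log hz)
    (beta_nonneg hγ0 hγ1)

lemma q_mono (hγ0 : 0 < γ) (hγ1 : γ ≤ 1) {w z : ℝ} (hw : w ∈ Ioc (0:ℝ) (1/2))
    (hz : z ∈ Ioc (0:ℝ) (1/2)) (hwz : w ≤ z) : q γ w ≤ q γ z := by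
  have habs : |Real.log z| ≤ |Real.log w| := by
    have hw0 : Real.log w < 0 := Real.log_neg hw.1 (by linarith [hw.2])
    have hz0 : Real.log z < 0 := Real.log_neg hz.1 (by linarith [hz.2])
    have : Real.log w ≤ Real.log z := Real.log_le_log hw.1 hwz
    rw [abs_of_neg hw0, abs_of_neg hz0]; linarith
  have h1 : |Real.log z| ^ (1/γ - 1) ≤ |Real.log w| ^ (1/γ - 1) :=
    Real.rpow_le_rpow (abs_nonneg _) habs (beta_nonneg hγ0 hγ1)
  have h2 : (0:ℝ) < |Real.log z| ^ (1/γ - 1) :=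
    Real.rpow_pos_of_pos (abs_log_pos hz) _
  have hc : (0:ℝ) ≤ (Real.log 2) ^ (1/γ - 1) :=
    (Real.rpow_pos_of_pos (Real.log_pos (by norm_num)) _).le
  exact div_le_div_of_nonneg_left hc h2 h1 |>.trans_eq rfl

lemma Tmap_small {z : ℝ} (hz : z ∈ Ioc (0:ℝ) (1/2)) :
    Tmap γ z = z * (1 + q γ z) := by
  rw [Tmap, if_neg (not_le.2 hz.1), if_pos hz.2]; rfl

lemma Tmap_big {z : ℝ} (hz : z ∈ Ioc (1/2:ℝ) 1) :
    Tmap γ z = 2 * z - 1 := by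
  rw [Tmap, if_neg (by linarith [hz.1] : ¬ z ≤ 0), if_neg (not_le.2 hz.1)]

lemma Tmap_mem (hγ0 : 0 < γ) (hγ1 : γ ≤ 1) {z : ℝ} (hz : z ∈ Ioc (0:ℝ) 1) :
    Tmap γ z ∈ Ioc (0:ℝ) 1 := by
  by_cases h : z ≤ 1/2
  · have hz' : z ∈ Ioc (0:ℝ) (1/2) := ⟨hz.1, h⟩
    rw [Tmap_small hz']
    have hq0 := q_pos hγ0 hγ1 hz'
    have hq1 := q_le_one hγ0 hγ1 hz'
    constructor
    · nlinarith [hz'.1]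
    · nlinarith [hz'.1, hz'.2]
  · have hz' : z ∈ Ioc (1/2:ℝ) 1 := ⟨not_le.1 h, hz.2⟩
    rw [Tmap_big hz']
    constructor <;> [linarith [hz'.1]; linarith [hz'.2]]

lemma Tmap_expand_small (hγ0 : 0 < γ) (hγ1 : γ ≤ 1) {w z : ℝ}
    (hw : w ∈ Ioc (0:ℝ) (1/2)) (hz : z ∈ Ioc (0:ℝ) (1/2)) (hwz : w ≤ z) :
    z - w ≤ Tmap γ z - Tmap γ w := by
  rw [Tmap_small hw, Tmap_small hz]
  have h1 : w * q γ w ≤ z * q γ z :=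
    mul_le_mul hwz (q_mono hγ0 hγ1 hw hz hwz) (q_pos hγ0 hγ1 hw).le
      (by linarith [hz.1])
  nlinarith

lemma Tmap_gap (hγ0 : 0 < γ) (hγ1 : γ ≤ 1) {w z : ℝ}
    (hw : w ∈ Ioc (0:ℝ) (1/2)) (hz : z ∈ Ioc (0:ℝ) (1/2)) (hwz : w ≤ z) :
    w * q γ w ≤ Tmap γ z - z := by
  rw [Tmap_small hz]
  have h1 : w * q γ w ≤ z * q γ z :=
    mul_le_mul hwz (q_mono hγ0 hγ1 hw hz hwz) (q_pos hγ0 hγ1 hw).le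
      (by linarith [hz.1])
  nlinarith

lemma retSet_nonempty (hγ0 : 0 < γ) (hγ1 : γ ≤ 1) {x : ℝ}
    (hx : x ∈ Ioc (1/2:ℝ) 1) :
    {k : ℕ | 1 ≤ k ∧ (Tmap γ)^[k] x ∈ Set.Ioc (1 / 2 : ℝ) 1}.Nonempty := by
  by_contra h
  rw [Set.not_nonempty_iff_eq_empty, Set.eq_empty_iff_forall_notMem] at h
  have hnot : ∀ k, 1 ≤ k → (Tmap γ)^[k] x ∉ Set.Ioc (1/2:ℝ) 1 := by
    intro k hk hm; exact h k ⟨hk, hm⟩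
  have hmem : ∀ k, (Tmap γ)^[k] x ∈ Ioc (0:ℝ) 1 := by
    intro k
    induction k with
    | zero =>
      simp only [Function.iterate_zero, id_eq]
      exact ⟨by linarith [hx.1], hx.2⟩
    | succ n ih => rw [Function.iterate_succ_apply']; exact Tmap_mem hγ0 hγ1 ih
  have hsmall : ∀ k, 1 ≤ k → (Tmap γ)^[k] x ∈ Ioc (0:ℝ) (1/2) := by
    intro k hk
    refine ⟨(hmem k).1, ?_⟩
    by_contra hh
    exact hnot k hk ⟨not_le.1 hh, (hmem k).2⟩
  set a := (Tmap γ)^[1] x with ha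
  have haI : a ∈ Ioc (0:ℝ) (1/2) := hsmall 1 le_rfl
  set δ := a * q γ a with hδ
  have hδ0 : 0 < δ := mul_pos haI.1 (q_pos hγ0 hγ1 haI)
  have key : ∀ k : ℕ, a + k * δ ≤ (Tmap γ)^[k+1] x := by
    intro k
    induction k with
    | zero => simp [ha]
    | succ n ih =>
      have hI : (Tmap γ)^[n+1] x ∈ Ioc (0:ℝ) (1/2) := hsmall (n+1) (by omega)
      have hge : a ≤ (Tmap γ)^[n+1] x := by
        have : (0:ℝ) ≤ n * δ := by positivity
        linarith
      have := Tmap_gap hγ0 hγ1 haI hI hge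
      rw [Function.iterate_succ_apply']
      push_cast
      nlinarith
  obtain ⟨n, hn⟩ := exists_nat_gt ((1/2 - a) / δ)
  have h1 : (1/2 - a) / δ * δ < n * δ := by
    exact mul_lt_mul_of_pos_right hn hδ0
  rw [div_mul_cancel₀ _ hδ0.ne'] at h1
  have h2 := key n
  have h3 := (hsmall (n+1) (by omega)).2
  linarith

end StmtAux

open StmtAux in
/-- For all `x < y` in `Y` such that the first return time `R` is constant on `[x, y]`,
the induced map satisfies `|F(y) - F(x)| ≥ 2 (y - x)`. -/
theorem stmt0 (γ : ℝ) (hγ0 : 0 < γ) (hγ1 : γ ≤ 1)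
    (x y : ℝ) (hx : x ∈ Set.Ioc (1 / 2 : ℝ) 1) (hy : y ∈ Set.Ioc (1 / 2 : ℝ) 1)
    (hxy : x < y)
    (hconst : ∀ z ∈ Set.Icc x y, retTime γ z = retTime γ x) :
    2 * (y - x) ≤ |indMap γ y - indMap γ x| := by
  set R := retTime γ x with hR
  have hSx := retSet_nonempty hγ0 hγ1 hx
  have hSy := retSet_nonempty hγ0 hγ1 hy
  have hRx : R ∈ {k : ℕ | 1 ≤ k ∧ (Tmap γ)^[k] x ∈ Set.Ioc (1 / 2 : ℝ) 1} :=
    Nat.sInf_mem hSx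
  have hRy' : retTime γ y = R := hconst y ⟨hxy.le, le_rfl⟩
  have hRy : R ∈ {k : ℕ | 1 ≤ k ∧ (Tmap γ)^[k] y ∈ Set.Ioc (1 / 2 : ℝ) 1} := by
    rw [← hRy']; exact Nat.sInf_mem hSy
  -- minimality
  have hminx : ∀ k, 1 ≤ k → k < R → (Tmap γ)^[k] x ∉ Set.Ioc (1/2:ℝ) 1 := by
    intro k h1 h2 hm
    have h5 : retTime γ x ≤ k := by
      rw [retTime]; exact Nat.sInf_le ⟨h1, hm⟩
    rw [← hR] at h5; omega
  have hminy : ∀ k, 1 ≤ k → k < R → (Tmap γ)^[k] y ∉ Set.Ioc (1/2:ℝ) 1 := by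
    intro k h1 h2 hm
    have h5 : retTime γ y ≤ k := by
      rw [retTime]; exact Nat.sInf_le ⟨h1, hm⟩
    rw [hRy'] at h5; omega
  have hmemx : ∀ k, (Tmap γ)^[k] x ∈ Ioc (0:ℝ) 1 := by
    intro k
    induction k with
    | zero =>
      simp only [Function.iterate_zero, id_eq]
      exact ⟨by linarith [hx.1], hx.2⟩
    | succ n ih => rw [Function.iterate_succ_apply']; exact Tmap_mem hγ0 hγ1 ih
  have hmemy : ∀ k, (Tmap γ)^[k] y ∈ Ioc (0:ℝ) 1 := by
    intro k
    induction k with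
    | zero =>
      simp only [Function.iterate_zero, id_eq]
      exact ⟨by linarith [hy.1], hy.2⟩
    | succ n ih => rw [Function.iterate_succ_apply']; exact Tmap_mem hγ0 hγ1 ih
  -- main induction
  have main : ∀ k, 1 ≤ k → k ≤ R →
      2 * (y - x) ≤ (Tmap γ)^[k] y - (Tmap γ)^[k] x := by
    intro k hk1
    induction k with
    | zero => omega
    | succ n ih =>
      intro hkR
      rcases Nat.eq_zero_or_pos n with hn0 | hn1
      · subst hn0
        simp only [zero_add, Function.iterate_one]
        rw [Tmap_big hx, Tmap_big hy]
        linarith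
      · have hnR : n < R := by omega
        have ihn := ih hn1 (by omega)
        have hxs : (Tmap γ)^[n] x ∈ Ioc (0:ℝ) (1/2) := by
          refine ⟨(hmemx n).1, ?_⟩
          by_contra hh
          exact hminx n hn1 hnR ⟨not_le.1 hh, (hmemx n).2⟩
        have hys : (Tmap γ)^[n] y ∈ Ioc (0:ℝ) (1/2) := by
          refine ⟨(hmemy n).1, ?_⟩
          by_contra hh
          exact hminy n hn1 hnR ⟨not_le.1 hh, (hmemy n).2⟩
        have hle : (Tmap γ)^[n] x ≤ (Tmap γ)^[n] y := by linarith
        have := Tmap_expand_small hγ0 hγ1 hxs hys hle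
        rw [Function.iterate_succ_apply', Function.iterate_succ_apply']
        linarith
  have hfin := main R hRx.1 le_rfl
  have : indMap γ y - indMap γ x = (Tmap γ)^[R] y - (Tmap γ)^[R] x := by
    rw [indMap, indMap, hRy', hR]
  rw [this, abs_of_nonneg (by linarith)]
  exact hfin
end

section
/- There exists a constant C > 0 such that for all x < y in Y with the first return time R constant on [x, y] and such that the iterate T^{R(x)} is differentiable at both x and y with strictly positive derivative, one has |log (T^{R(x)})'(y) − log (T^{R(x)})'(x)| ≤ C |F(y) − F(x)| (bounded distortion of the induced map). -/
open MeasureTheory Set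

/-!
Points of `Y` with return time `n + 1` satisfy `T^{n+1} z = L^n (2z - 1)`, where
`L u = u + c u (-log u)^(-β)` is the left branch, so `log (T^{n+1})'` differs at `x` and `y` by
`∑ j < n, (log L'(q j) - log L'(p j))` along the orbits `p`, `q` of `2x - 1 < 2y - 1`.
Each term is at most `K H'(p j) (q j - p j)`, where `H u = (-log u + β + 1)^(-β)` takes values
in `[0, 1]` and has an antitone derivative dominating `L''`. As `L'` is increasing, `L` stretches
`[p j, q j]` at least as much as the preceding gap `[p (j-1), p j]`, so the ratio of their lengths
grows along the orbit and `q j - p j ≤ (q n - p n) / (p n - p (n-1)) * (p j - p (j-1))`. The last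
gap is bounded below since `p (n-1) > 1/4`, and `∑ H'(p j) (p j - p (j-1))` telescopes against
`H ≤ 1`.
-/

open Real

theorem exists_eq_mul_sub_of_hasDerivAt {f f' : ℝ → ℝ} {a b : ℝ} (hab : a < b)
    (hf : ∀ t ∈ Icc a b, HasDerivAt f (f' t) t) :
    ∃ ξ ∈ Ioo a b, f b - f a = f' ξ * (b - a) := by
  obtain ⟨ξ, hξ, h⟩ := exists_hasDerivAt_eq_slope f f' hab
    (fun t ht => (hf t ht).continuousAt.continuousWithinAt)
    (fun t ht => hf t (Ioo_subset_Icc_self ht))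
  exact ⟨ξ, hξ, by rw [h, div_mul_cancel₀ _ (sub_ne_zero.2 hab.ne')]⟩

theorem HasDerivAt.eq_of_eqOn_Icc {f g : ℝ → ℝ} {f' g' x y z : ℝ} (hxy : x < y)
    (hz : z ∈ Icc x y) (hfg : EqOn f g (Icc x y)) (hf : HasDerivAt f f' z)
    (hg : HasDerivAt g g' z) : f' = g' :=
  (uniqueDiffOn_Icc hxy z hz).eq_deriv _ hf.hasDerivWithinAt
    (hg.hasDerivWithinAt.congr hfg (hfg hz))

theorem hasDerivAt_iterate_of_forall {f f' : ℝ → ℝ} {a : ℝ} {n : ℕ}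
    (h : ∀ j < n, HasDerivAt f (f' (f^[j] a)) (f^[j] a)) :
    HasDerivAt f^[n] (∏ j ∈ Finset.range n, f' (f^[j] a)) a := by
  induction n with
  | zero => simpa using hasDerivAt_id a
  | succ n ih =>
    rw [Function.iterate_succ', Finset.prod_range_succ, mul_comm]
    exact (h n n.lt_succ_self).comp a (ih fun j hj => h j (hj.trans n.lt_succ_self))

theorem log_sub_log_le_div {a b : ℝ} (ha : 0 < a) (hb : 0 < b) :
    log b - log a ≤ (b - a) / a := by
  have := log_le_sub_one_of_pos (div_pos hb ha)
  rwa [log_div hb.ne' ha.ne', div_sub_one ha.ne'] at this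

theorem hasDerivAt_neg_log_add_rpow (s e : ℝ) {u : ℝ} (hu : 0 < u) (h : 0 < -log u + s) :
    HasDerivAt (fun t => (-log t + s) ^ e) (-e * (-log u + s) ^ (e - 1) / u) u := by
  have := (hasDerivAt_rpow_const (p := e) (Or.inl h.ne')).comp u
    ((hasDerivAt_log hu.ne').neg.add_const s)
  exact this.congr_deriv (by ring)

namespace IntermittentMap

theorem neg_log_pos {u : ℝ} (hu : u ∈ Ioo (0 : ℝ) 1) : 0 < -log u :=
  neg_pos.2 (log_neg hu.1 hu.2)

theorem log_two_le_neg_log {u : ℝ} (hu : u ∈ Ioc (0 : ℝ) (1 / 2)) : log 2 ≤ -log u := by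
  have := log_le_log hu.1 hu.2
  rw [one_div, log_inv] at this
  linarith

theorem Ioc_zero_half_subset_Ioo : Ioc (0 : ℝ) (1 / 2) ⊆ Ioo 0 1 :=
  fun _ hu => ⟨hu.1, by linarith [hu.2]⟩

theorem mem_Ioc_zero_half_of_notMem {u : ℝ} (hu : u ∈ Ioc (0 : ℝ) 1)
    (hY : u ∉ Ioc (1 / 2 : ℝ) 1) : u ∈ Ioc (0 : ℝ) (1 / 2) :=
  ⟨hu.1, not_lt.1 fun h => hY ⟨h, hu.2⟩⟩

noncomputable def leftBranch (β u : ℝ) : ℝ := u * (1 + log 2 ^ β / |log u| ^ β)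

noncomputable def leftBranchDeriv (β u : ℝ) : ℝ :=
  1 + log 2 ^ β * (-log u) ^ (-β) + log 2 ^ β * β * (-log u) ^ (-β - 1)

noncomputable def leftBranchSecondDeriv (β u : ℝ) : ℝ :=
  log 2 ^ β * β * (-log u + β + 1) * (-log u) ^ (-β - 2) / u

noncomputable def minStep (β : ℝ) : ℝ := 2 ^ (-β) / 4

/-- The shift by `β + 1` in the base is what makes `potentialDeriv` antitone on `(0, 1)`. -/
noncomputable def potential (β u : ℝ) : ℝ := (-log u + β + 1) ^ (-β)

noncomputable def potentialDeriv (β u : ℝ) : ℝ := β * (-log u + β + 1) ^ (-β - 1) / u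

noncomputable def distortionConst (β : ℝ) : ℝ := log 2 ^ β * (1 + (β + 1) / log 2) ^ (β + 2)

variable {β : ℝ}

theorem minStep_pos : 0 < minStep β := by
  unfold minStep
  positivity

theorem distortionConst_pos (hβ : 0 ≤ β) : 0 < distortionConst β := by
  have := log_pos one_lt_two
  unfold distortionConst
  positivity

theorem leftBranch_eq {u : ℝ} (hu : u ∈ Ioo (0 : ℝ) 1) :
    leftBranch β u = u + log 2 ^ β * u * (-log u) ^ (-β) := by
  rw [leftBranch, abs_of_neg (log_neg hu.1 hu.2), rpow_neg (neg_log_pos hu).le]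
  ring

theorem lt_leftBranch {u : ℝ} (hu : u ∈ Ioo (0 : ℝ) 1) : u < leftBranch β u := by
  have := neg_log_pos hu
  have := hu.1
  have : 0 < log 2 ^ β * u * (-log u) ^ (-β) := by positivity
  rw [leftBranch_eq hu]
  linarith

theorem leftBranch_le_two_mul (hβ : 0 ≤ β) {u : ℝ} (hu : u ∈ Ioc (0 : ℝ) (1 / 2)) :
    leftBranch β u ≤ 2 * u := by
  have hl2 := log_pos one_lt_two
  have hW := log_two_le_neg_log hu
  have h : log 2 ^ β * (-log u) ^ (-β) ≤ 1 := by
    rw [rpow_neg (by linarith), ← div_eq_mul_inv,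
      div_le_one (rpow_pos_of_pos (by linarith) β)]
    exact rpow_le_rpow hl2.le hW hβ
  rw [leftBranch_eq (Ioc_zero_half_subset_Ioo hu)]
  nlinarith [hu.1]

theorem hasDerivAt_leftBranch {u : ℝ} (hu : u ∈ Ioo (0 : ℝ) 1) :
    HasDerivAt (leftBranch β) (leftBranchDeriv β u) u := by
  have hpow := hasDerivAt_neg_log_add_rpow 0 (-β) hu.1 (by simpa using neg_log_pos hu)
  simp only [add_zero] at hpow
  have h := (hasDerivAt_id u).add (((hasDerivAt_id u).const_mul (log 2 ^ β)).mul hpow)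
  have heq : leftBranch β =ᶠ[nhds u] fun t => id t + log 2 ^ β * id t * (-log t) ^ (-β) :=
    Filter.eventuallyEq_of_mem (Ioo_mem_nhds hu.1 hu.2) fun t ht => leftBranch_eq ht
  refine (h.congr_of_eventuallyEq heq).congr_deriv ?_
  have := hu.1.ne'
  rw [leftBranchDeriv, id]
  field_simp
  ring

theorem one_le_leftBranchDeriv (hβ : 0 ≤ β) {u : ℝ} (hu : u ∈ Ioo (0 : ℝ) 1) :
    1 ≤ leftBranchDeriv β u := by
  have := neg_log_pos hu
  have := log_pos one_lt_two
  have : 0 ≤ log 2 ^ β * (-log u) ^ (-β) + log 2 ^ β * β * (-log u) ^ (-β - 1) := by positivity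
  rw [leftBranchDeriv]
  linarith

theorem leftBranchDeriv_monotoneOn (hβ : 0 ≤ β) : MonotoneOn (leftBranchDeriv β) (Ioo 0 1) := by
  intro u hu v hv huv
  have hWv := neg_log_pos hv
  have hW : -log v ≤ -log u := neg_le_neg (log_le_log hu.1 huv)
  have := log_pos one_lt_two
  have h1 : (-log u) ^ (-β) ≤ (-log v) ^ (-β) := rpow_le_rpow_of_nonpos hWv hW (by linarith)
  have h2 : (-log u) ^ (-β - 1) ≤ (-log v) ^ (-β - 1) :=
    rpow_le_rpow_of_nonpos hWv hW (by linarith)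
  simp only [leftBranchDeriv]
  gcongr

theorem hasDerivAt_leftBranchDeriv {u : ℝ} (hu : u ∈ Ioo (0 : ℝ) 1) :
    HasDerivAt (leftBranchDeriv β) (leftBranchSecondDeriv β u) u := by
  have hW := neg_log_pos hu
  have hpow (e : ℝ) := hasDerivAt_neg_log_add_rpow 0 e hu.1 (by simpa using hW)
  simp only [add_zero] at hpow
  have h := ((hasDerivAt_const u (1 : ℝ)).add ((hpow (-β)).const_mul (log 2 ^ β))).add
    ((hpow (-β - 1)).const_mul (log 2 ^ β * β))
  refine h.congr_deriv ?_
  have hsplit : (-log u) ^ (-β - 1) = -log u * (-log u) ^ (-β - 2) := by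
    rw [show -β - 1 = 1 + (-β - 2) by ring, rpow_add hW, rpow_one]
  rw [leftBranchSecondDeriv, show -β - 1 - 1 = -β - 2 by ring, hsplit]
  field_simp
  ring

theorem leftBranchSecondDeriv_le (hβ : 0 ≤ β) {u : ℝ} (hu : u ∈ Ioc (0 : ℝ) (1 / 2)) :
    leftBranchSecondDeriv β u ≤ distortionConst β * potentialDeriv β u := by
  unfold leftBranchSecondDeriv
  have hl2 := log_pos one_lt_two
  have hWl := log_two_le_neg_log hu
  have hW : 0 < -log u := by linarith
  set A := -log u + β + 1 with hA
  have hA0 : 0 < A := by linarith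
  have hratio : A / -log u ≤ 1 + (β + 1) / log 2 := by
    rw [hA, add_assoc, add_div, div_self hW.ne']
    gcongr
  have hsplit : A * (-log u) ^ (-β - 2) = (A / -log u) ^ (β + 2) * A ^ (-β - 1) := by
    rw [div_rpow hA0.le hW.le, show -β - 2 = -(β + 2) by ring, rpow_neg hW.le,
      div_mul_eq_mul_div, ← rpow_add hA0, show β + 2 + (-β - 1) = 1 by ring, rpow_one,
      div_eq_mul_inv]
  calc log 2 ^ β * β * A * (-log u) ^ (-β - 2) / u
      = log 2 ^ β * β / u * (A * (-log u) ^ (-β - 2)) := by ring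
    _ = log 2 ^ β * β / u * ((A / -log u) ^ (β + 2) * A ^ (-β - 1)) := by rw [hsplit]
    _ ≤ log 2 ^ β * β / u * ((1 + (β + 1) / log 2) ^ (β + 2) * A ^ (-β - 1)) := by
        have := rpow_pos_of_pos hA0 (-β - 1)
        have : 0 ≤ log 2 ^ β * β / u := div_nonneg (by positivity) hu.1.le
        gcongr
    _ = distortionConst β * potentialDeriv β u := by
        rw [distortionConst, potentialDeriv]
        ring

theorem hasDerivAt_potential (hβ : 0 ≤ β) {u : ℝ} (hu : u ∈ Ioo (0 : ℝ) 1) :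
    HasDerivAt (potential β) (potentialDeriv β u) u := by
  have h := hasDerivAt_neg_log_add_rpow (β + 1) (-β) hu.1 (by linarith [neg_log_pos hu])
  simp only [← add_assoc, neg_neg] at h
  exact h

theorem potential_nonneg (hβ : 0 ≤ β) {u : ℝ} (hu : u ∈ Ioo (0 : ℝ) 1) : 0 ≤ potential β u :=
  rpow_nonneg (by linarith [neg_log_pos hu]) _

theorem potential_le_one (hβ : 0 ≤ β) {u : ℝ} (hu : u ∈ Ioo (0 : ℝ) 1) : potential β u ≤ 1 :=
  rpow_le_one_of_one_le_of_nonpos (by linarith [neg_log_pos hu]) (by linarith)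

theorem potentialDeriv_nonneg (hβ : 0 ≤ β) {u : ℝ} (hu : u ∈ Ioo (0 : ℝ) 1) :
    0 ≤ potentialDeriv β u := by
  have := rpow_nonneg (by linarith [neg_log_pos hu] : 0 ≤ -log u + β + 1) (-β - 1)
  have := hu.1
  unfold potentialDeriv
  positivity

theorem potentialDeriv_antitoneOn (hβ : 0 ≤ β) : AntitoneOn (potentialDeriv β) (Ioo 0 1) := by
  intro u hu v hv huv
  have hBA : -log v + β + 1 ≤ -log u + β + 1 := by linarith [log_le_log hu.1 huv]
  have hB : β + 1 ≤ -log v + β + 1 := by linarith [neg_log_pos hv]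
  have hlog : (β + 1) * (log (-log u + β + 1) - log (-log v + β + 1)) ≤ log v - log u :=
    calc (β + 1) * (log (-log u + β + 1) - log (-log v + β + 1))
        ≤ (β + 1) * ((-log u + β + 1 - (-log v + β + 1)) / (-log v + β + 1)) := by
          gcongr
          exact log_sub_log_le_div (by linarith) (by linarith)
      _ ≤ -log u + β + 1 - (-log v + β + 1) := by
          rw [mul_div_assoc']
          exact div_le_of_le_mul₀ (by linarith) (by linarith) (by nlinarith)
      _ = log v - log u := by ring
  have hexp (w : ℝ) (hw : w ∈ Ioo (0 : ℝ) 1) : (-log w + β + 1) ^ (-β - 1) / w =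
      exp (log (-log w + β + 1) * (-β - 1) - log w) := by
    rw [rpow_def_of_pos (by linarith [neg_log_pos hw]), exp_sub, exp_log hw.1]
  simp only [potentialDeriv, mul_div_assoc]
  refine mul_le_mul_of_nonneg_left ?_ hβ
  rw [hexp u hu, hexp v hv]
  exact exp_le_exp.2 (by linarith)

theorem leftBranchDeriv_mul_sub_le (hβ : 0 ≤ β) {a b : ℝ} (ha : 0 < a) (hab : a < b)
    (hb : b < 1) : leftBranchDeriv β a * (b - a) ≤ leftBranch β b - leftBranch β a := by
  obtain ⟨ξ, hξ, h⟩ := exists_eq_mul_sub_of_hasDerivAt hab fun t ht =>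
    hasDerivAt_leftBranch ⟨ha.trans_le ht.1, ht.2.trans_lt hb⟩
  rw [h]
  gcongr
  exact leftBranchDeriv_monotoneOn hβ ⟨ha, hab.trans hb⟩ ⟨ha.trans hξ.1, hξ.2.trans hb⟩ hξ.1.le

theorem leftBranch_sub_le_mul (hβ : 0 ≤ β) {a b : ℝ} (ha : 0 < a) (hab : a < b) (hb : b < 1) :
    leftBranch β b - leftBranch β a ≤ leftBranchDeriv β b * (b - a) := by
  obtain ⟨ξ, hξ, h⟩ := exists_eq_mul_sub_of_hasDerivAt hab fun t ht =>
    hasDerivAt_leftBranch ⟨ha.trans_le ht.1, ht.2.trans_lt hb⟩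
  rw [h]
  gcongr
  exact leftBranchDeriv_monotoneOn hβ ⟨ha.trans hξ.1, hξ.2.trans hb⟩ ⟨ha.trans hab, hb⟩ hξ.2.le

theorem leftBranchDeriv_sub_le (hβ : 0 ≤ β) {a b : ℝ} (ha : 0 < a) (hab : a < b)
    (hb : b ≤ 1 / 2) : leftBranchDeriv β b - leftBranchDeriv β a ≤
      distortionConst β * potentialDeriv β a * (b - a) := by
  obtain ⟨ξ, hξ, h⟩ := exists_eq_mul_sub_of_hasDerivAt hab fun t ht =>
    hasDerivAt_leftBranchDeriv (Ioc_zero_half_subset_Ioo ⟨ha.trans_le ht.1, ht.2.trans hb⟩)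
  have hξ' : ξ ∈ Ioc (0 : ℝ) (1 / 2) := ⟨ha.trans hξ.1, hξ.2.le.trans hb⟩
  have hK := (distortionConst_pos hβ).le
  rw [h]
  gcongr
  calc _ ≤ distortionConst β * potentialDeriv β ξ := leftBranchSecondDeriv_le hβ hξ'
    _ ≤ distortionConst β * potentialDeriv β a := by
      gcongr
      exact potentialDeriv_antitoneOn hβ (Ioc_zero_half_subset_Ioo ⟨ha, hab.le.trans hb⟩)
        (Ioc_zero_half_subset_Ioo hξ') hξ.1.le

theorem log_leftBranchDeriv_sub_le (hβ : 0 ≤ β) {a b : ℝ} (ha : 0 < a) (hab : a < b)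
    (hb : b ≤ 1 / 2) : log (leftBranchDeriv β b) - log (leftBranchDeriv β a) ≤
      distortionConst β * potentialDeriv β a * (b - a) := by
  have ha' : a ∈ Ioo (0 : ℝ) 1 := ⟨ha, by linarith⟩
  have hone := one_le_leftBranchDeriv hβ ha'
  have hmono := leftBranchDeriv_monotoneOn hβ ha' ⟨ha.trans hab, by linarith⟩ hab.le
  calc log (leftBranchDeriv β b) - log (leftBranchDeriv β a)
      ≤ (leftBranchDeriv β b - leftBranchDeriv β a) / leftBranchDeriv β a :=
        log_sub_log_le_div (by linarith) (by linarith)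
    _ ≤ leftBranchDeriv β b - leftBranchDeriv β a :=
        div_le_self (by linarith) hone
    _ ≤ _ := leftBranchDeriv_sub_le hβ ha hab hb

theorem potentialDeriv_mul_sub_le (hβ : 0 ≤ β) {a b : ℝ} (ha : 0 < a) (hab : a < b)
    (hb : b < 1) : potentialDeriv β b * (b - a) ≤ potential β b - potential β a := by
  obtain ⟨ξ, hξ, h⟩ := exists_eq_mul_sub_of_hasDerivAt hab fun t ht =>
    hasDerivAt_potential hβ ⟨ha.trans_le ht.1, ht.2.trans_lt hb⟩
  rw [h]
  gcongr
  exact potentialDeriv_antitoneOn hβ ⟨ha.trans hξ.1, hξ.2.trans hb⟩ ⟨ha.trans hab, hb⟩ hξ.2.le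

theorem minStep_le_leftBranch_sub (hβ : 0 ≤ β) {u : ℝ} (hu : u ∈ Icc (1 / 4 : ℝ) (1 / 2)) :
    minStep β ≤ leftBranch β u - u := by
  have hl2 := log_pos one_lt_two
  have hu0 : 0 < u := by linarith [hu.1]
  have hW : -log u ≤ 2 * log 2 := by
    have := log_le_log (by norm_num) hu.1
    rw [show (1 / 4 : ℝ) = (2 ^ 2)⁻¹ by norm_num, log_inv, log_pow] at this
    push_cast at this
    linarith
  have hpow : 2 ^ (-β) ≤ log 2 ^ β * (-log u) ^ (-β) := by
    calc (2 : ℝ) ^ (-β) = log 2 ^ β * (2 * log 2) ^ (-β) := by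
          rw [mul_rpow (by norm_num) hl2.le, ← mul_assoc, mul_comm (log 2 ^ β),
            mul_assoc, ← rpow_add hl2, add_neg_cancel, rpow_zero, mul_one]
      _ ≤ log 2 ^ β * (-log u) ^ (-β) := by
          have hWpos : 0 < -log u := neg_log_pos ⟨hu0, by linarith [hu.2]⟩
          exact mul_le_mul_of_nonneg_left (rpow_le_rpow_of_nonpos hWpos hW (by linarith))
            (by positivity)
  rw [leftBranch_eq ⟨hu0, by linarith [hu.2]⟩, minStep]
  nlinarith [hu.1, rpow_pos_of_pos (two_pos : (0 : ℝ) < 2) (-β)]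

/-- `prevIterate β a (j + 1) = L^[j] a`; the missing predecessor of `a` is replaced by `a / 2`,
which still satisfies `L (a / 2) ≤ a`. -/
noncomputable def prevIterate (β a : ℝ) : ℕ → ℝ
  | 0 => a / 2
  | j + 1 => (leftBranch β)^[j] a

section Orbits

variable {a b : ℝ} {n : ℕ}

theorem iterate_lt_iterate (hβ : 0 ≤ β) (hab : a < b)
    (ha : ∀ j < n, (leftBranch β)^[j] a ∈ Ioc (0 : ℝ) (1 / 2))
    (hb : ∀ j < n, (leftBranch β)^[j] b ∈ Ioc (0 : ℝ) (1 / 2)) :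
    ∀ j ≤ n, (leftBranch β)^[j] a < (leftBranch β)^[j] b
  | 0, _ => hab
  | j + 1, hj => by
    have hlt := iterate_lt_iterate hβ hab ha hb j (Nat.le_of_succ_le hj)
    have hone := one_le_leftBranchDeriv hβ (Ioc_zero_half_subset_Ioo (ha j hj))
    have hexp := leftBranchDeriv_mul_sub_le hβ (ha j hj).1 hlt (by linarith [(hb j hj).2])
    rw [Function.iterate_succ_apply', Function.iterate_succ_apply']
    nlinarith

theorem prevIterate_mem (hn : 0 < n) (ha : ∀ j < n, (leftBranch β)^[j] a ∈ Ioc (0 : ℝ) (1 / 2)) :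
    ∀ j ≤ n, prevIterate β a j ∈ Ioc (0 : ℝ) (1 / 2) ∧ prevIterate β a j < (leftBranch β)^[j] a
  | 0, _ => by
    have := ha 0 hn
    simp only [Function.iterate_zero, id] at this
    simp only [prevIterate, Function.iterate_zero, id]
    exact ⟨⟨by linarith [this.1], by linarith [this.2]⟩, by linarith [this.1]⟩
  | j + 1, hj => by
    rw [prevIterate, Function.iterate_succ_apply']
    exact ⟨ha j hj, lt_leftBranch (Ioc_zero_half_subset_Ioo (ha j hj))⟩

theorem leftBranch_prevIterate_le (hβ : 0 ≤ β)
    (ha : ∀ j < n, (leftBranch β)^[j] a ∈ Ioc (0 : ℝ) (1 / 2)) :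
    ∀ j < n, leftBranch β (prevIterate β a j) ≤ (leftBranch β)^[j] a
  | 0, h0 => by
    have := ha 0 h0
    simp only [Function.iterate_zero, id] at this ⊢
    have := leftBranch_le_two_mul hβ (u := a / 2) ⟨by linarith [this.1], by linarith [this.2]⟩
    rw [prevIterate]
    linarith
  | j + 1, _ => by rw [prevIterate, Function.iterate_succ_apply']

theorem gap_ratio_le (hβ : 0 ≤ β) {r p q : ℝ} (hr : 0 < r) (hrp : r < p) (hpq : p < q)
    (hq : q < 1) (hLr : leftBranch β r ≤ p) :
    (q - p) / (p - r) ≤ (leftBranch β q - leftBranch β p) / (leftBranch β p - p) := by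
  have hp1 : p < 1 := hpq.trans hq
  have hexp := leftBranchDeriv_mul_sub_le hβ (hr.trans hrp) hpq hq
  have hcon := leftBranch_sub_le_mul hβ hr hrp hp1
  have hstep := lt_leftBranch (β := β) ⟨hr.trans hrp, hp1⟩
  rw [div_le_div_iff₀ (by linarith) (by linarith)]
  calc (q - p) * (leftBranch β p - p)
      ≤ (q - p) * (leftBranchDeriv β p * (p - r)) :=
        mul_le_mul_of_nonneg_left (by linarith) (by linarith)
    _ = leftBranchDeriv β p * (q - p) * (p - r) := by ring
    _ ≤ (leftBranch β q - leftBranch β p) * (p - r) :=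
        mul_le_mul_of_nonneg_right hexp (by linarith)

theorem gap_ratio_le_exit (hβ : 0 ≤ β) (hab : a < b) (hn : 0 < n)
    (ha : ∀ j < n, (leftBranch β)^[j] a ∈ Ioc (0 : ℝ) (1 / 2))
    (hb : ∀ j < n, (leftBranch β)^[j] b ∈ Ioc (0 : ℝ) (1 / 2)) {j : ℕ} (hj : j ≤ n) :
    ((leftBranch β)^[j] b - (leftBranch β)^[j] a) / ((leftBranch β)^[j] a - prevIterate β a j) ≤
      ((leftBranch β)^[n] b - (leftBranch β)^[n] a) /
        ((leftBranch β)^[n] a - prevIterate β a n) := by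
  induction hj using Nat.decreasingInduction with
  | self => exact le_rfl
  | of_succ k hk ih =>
    refine le_trans ?_ ih
    have hr := prevIterate_mem hn ha k hk.le
    have hlt := iterate_lt_iterate hβ hab ha hb k hk.le
    rw [Function.iterate_succ_apply', Function.iterate_succ_apply']
    exact gap_ratio_le hβ hr.1.1 hr.2 hlt (by linarith [(hb k hk).2])
      (leftBranch_prevIterate_le hβ ha k hk)

theorem sum_potentialDeriv_mul_sub_le (hβ : 0 ≤ β) {r : ℕ → ℝ}
    (hr : ∀ j ≤ n, r j ∈ Ioo (0 : ℝ) 1) (hmono : ∀ j < n, r j < r (j + 1)) :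
    ∑ j ∈ Finset.range n, potentialDeriv β (r (j + 1)) * (r (j + 1) - r j) ≤ 1 :=
  calc ∑ j ∈ Finset.range n, potentialDeriv β (r (j + 1)) * (r (j + 1) - r j)
      ≤ ∑ j ∈ Finset.range n, (potential β (r (j + 1)) - potential β (r j)) := by
        refine Finset.sum_le_sum fun j hj => ?_
        have hj := Finset.mem_range.1 hj
        exact potentialDeriv_mul_sub_le hβ (hr j hj.le).1 (hmono j hj) (hr (j + 1) hj).2
    _ = potential β (r n) - potential β (r 0) :=
        Finset.sum_range_sub (fun j => potential β (r j)) n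
    _ ≤ 1 := by
        linarith [potential_le_one hβ (hr n le_rfl), potential_nonneg hβ (hr 0 n.zero_le)]

theorem sum_log_leftBranchDeriv_sub_le (hβ : 0 ≤ β) (hab : a < b) (hn : 0 < n)
    (ha : ∀ j < n, (leftBranch β)^[j] a ∈ Ioc (0 : ℝ) (1 / 2))
    (hb : ∀ j < n, (leftBranch β)^[j] b ∈ Ioc (0 : ℝ) (1 / 2)) :
    ∑ j ∈ Finset.range n, (log (leftBranchDeriv β ((leftBranch β)^[j] b)) -
        log (leftBranchDeriv β ((leftBranch β)^[j] a))) ≤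
      distortionConst β * (((leftBranch β)^[n] b - (leftBranch β)^[n] a) /
        ((leftBranch β)^[n] a - prevIterate β a n)) := by
  set ρ := ((leftBranch β)^[n] b - (leftBranch β)^[n] a) /
    ((leftBranch β)^[n] a - prevIterate β a n)
  have hK := distortionConst_pos hβ
  have hρ : 0 ≤ ρ := div_nonneg (sub_pos.2 (iterate_lt_iterate hβ hab ha hb n le_rfl)).le
    (sub_pos.2 (prevIterate_mem hn ha n le_rfl).2).le
  have hterm : ∀ j < n, log (leftBranchDeriv β ((leftBranch β)^[j] b)) -
      log (leftBranchDeriv β ((leftBranch β)^[j] a)) ≤ distortionConst β * ρ *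
        (potentialDeriv β (prevIterate β a (j + 1)) *
          (prevIterate β a (j + 1) - prevIterate β a j)) := by
    intro j hj
    have hr := prevIterate_mem hn ha j hj.le
    have hgap : (leftBranch β)^[j] b - (leftBranch β)^[j] a ≤
        ρ * ((leftBranch β)^[j] a - prevIterate β a j) :=
      (div_le_iff₀ (sub_pos.2 hr.2)).1 (gap_ratio_le_exit hβ hab hn ha hb hj.le)
    have hh := potentialDeriv_nonneg hβ (Ioc_zero_half_subset_Ioo (ha j hj))
    calc _ ≤ distortionConst β * potentialDeriv β ((leftBranch β)^[j] a) *
          ((leftBranch β)^[j] b - (leftBranch β)^[j] a) :=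
          log_leftBranchDeriv_sub_le hβ (ha j hj).1 (iterate_lt_iterate hβ hab ha hb j hj.le)
            (hb j hj).2
      _ ≤ distortionConst β * potentialDeriv β ((leftBranch β)^[j] a) *
          (ρ * ((leftBranch β)^[j] a - prevIterate β a j)) :=
          mul_le_mul_of_nonneg_left hgap (by positivity)
      _ = _ := by rw [prevIterate]; ring
  calc _ ≤ ∑ j ∈ Finset.range n, distortionConst β * ρ *
        (potentialDeriv β (prevIterate β a (j + 1)) *
          (prevIterate β a (j + 1) - prevIterate β a j)) :=
        Finset.sum_le_sum fun j hj => hterm j (Finset.mem_range.1 hj)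
    _ ≤ distortionConst β * ρ := by
        rw [← Finset.mul_sum]
        refine mul_le_of_le_one_right (by positivity) (sum_potentialDeriv_mul_sub_le hβ
          (fun j hj => Ioc_zero_half_subset_Ioo (prevIterate_mem hn ha j hj).1) fun j hj => ?_)
        exact (prevIterate_mem hn ha j hj.le).2

theorem abs_log_prod_leftBranchDeriv_sub_le (hβ : 0 ≤ β) (hab : a < b)
    (ha : ∀ j < n, (leftBranch β)^[j] a ∈ Ioc (0 : ℝ) (1 / 2))
    (hb : ∀ j < n, (leftBranch β)^[j] b ∈ Ioc (0 : ℝ) (1 / 2))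
    (hexit : 1 / 2 < (leftBranch β)^[n] a) :
    |log (∏ j ∈ Finset.range n, leftBranchDeriv β ((leftBranch β)^[j] b)) -
        log (∏ j ∈ Finset.range n, leftBranchDeriv β ((leftBranch β)^[j] a))| ≤
      distortionConst β / minStep β * |(leftBranch β)^[n] b - (leftBranch β)^[n] a| := by
  have hC := div_pos (distortionConst_pos hβ) (minStep_pos (β := β))
  obtain _ | m := n
  · simpa using mul_nonneg hC.le (abs_nonneg (b - a))
  have hpos : ∀ j ∈ Finset.range (m + 1), 0 < leftBranchDeriv β ((leftBranch β)^[j] a) :=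
    fun j hj => zero_lt_one.trans_le
      (one_le_leftBranchDeriv hβ (Ioc_zero_half_subset_Ioo (ha j (Finset.mem_range.1 hj))))
  have hlt := iterate_lt_iterate hβ hab ha hb
  have hmono : ∀ j ∈ Finset.range (m + 1), leftBranchDeriv β ((leftBranch β)^[j] a) ≤
      leftBranchDeriv β ((leftBranch β)^[j] b) := fun j hj =>
    leftBranchDeriv_monotoneOn hβ (Ioc_zero_half_subset_Ioo (ha j (Finset.mem_range.1 hj)))
      (Ioc_zero_half_subset_Ioo (hb j (Finset.mem_range.1 hj)))
      (hlt j (Finset.mem_range.1 hj).le).le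
  have hstep : minStep β ≤ (leftBranch β)^[m + 1] a - prevIterate β a (m + 1) := by
    have hm := ha m m.lt_succ_self
    have := leftBranch_le_two_mul hβ hm
    rw [Function.iterate_succ_apply'] at hexit ⊢
    exact minStep_le_leftBranch_sub hβ ⟨by linarith, hm.2⟩
  have hgap := sub_pos.2 (hlt (m + 1) le_rfl)
  rw [abs_of_nonneg (sub_nonneg.2 (log_le_log (Finset.prod_pos hpos)
    (Finset.prod_le_prod (fun j hj => (hpos j hj).le) hmono))), abs_of_pos hgap,
    log_prod fun j hj => (hpos j hj).ne',
    log_prod fun j hj => ((hpos j hj).trans_le (hmono j hj)).ne', ← Finset.sum_sub_distrib]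
  calc _ ≤ _ := sum_log_leftBranchDeriv_sub_le hβ hab m.succ_pos ha hb
    _ ≤ distortionConst β * (((leftBranch β)^[m + 1] b - (leftBranch β)^[m + 1] a) /
          minStep β) :=
        mul_le_mul_of_nonneg_left (div_le_div_of_nonneg_left hgap.le minStep_pos hstep)
          (distortionConst_pos hβ).le
    _ = _ := by ring

end Orbits

theorem Tmap_of_mem_Ioc {γ u : ℝ} (hu : u ∈ Ioc (0 : ℝ) (1 / 2)) :
    Tmap γ u = leftBranch (1 / γ - 1) u := by
  rw [Tmap, if_neg (not_le.2 hu.1), if_pos hu.2, leftBranch]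

theorem Tmap_of_half_lt {γ u : ℝ} (hu : 1 / 2 < u) : Tmap γ u = 2 * u - 1 := by
  rw [Tmap, if_neg (not_le.2 (by linarith)), if_neg (not_le.2 hu)]

theorem retTime_eq_succ_spec {γ z : ℝ} {n : ℕ} (h : retTime γ z = n + 1) :
    (Tmap γ)^[n + 1] z ∈ Ioc (1 / 2 : ℝ) 1 ∧
      ∀ i, 1 ≤ i → i ≤ n → (Tmap γ)^[i] z ∉ Ioc (1 / 2 : ℝ) 1 := by
  unfold retTime at h
  have hne : {k : ℕ | 1 ≤ k ∧ (Tmap γ)^[k] z ∈ Ioc (1 / 2 : ℝ) 1}.Nonempty :=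
    nonempty_iff_ne_empty.2 fun hempty => by rw [hempty, Nat.sInf_empty] at h; omega
  refine ⟨?_, fun i hi1 hin hi => ?_⟩
  · have := Nat.sInf_mem hne
    rw [h] at this
    exact this.2
  · have := Nat.sInf_le (s := {k : ℕ | 1 ≤ k ∧ (Tmap γ)^[k] z ∈ Ioc (1 / 2 : ℝ) 1}) ⟨hi1, hi⟩
    omega

theorem iterate_Tmap_succ {γ z : ℝ} (hβ : 0 ≤ 1 / γ - 1) (hz : z ∈ Ioc (1 / 2 : ℝ) 1) :
    ∀ j : ℕ, (∀ i, 1 ≤ i → i ≤ j → (Tmap γ)^[i] z ∉ Ioc (1 / 2 : ℝ) 1) →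
      (Tmap γ)^[j + 1] z = (leftBranch (1 / γ - 1))^[j] (2 * z - 1) ∧
        (leftBranch (1 / γ - 1))^[j] (2 * z - 1) ∈ Ioc (0 : ℝ) 1
  | 0, _ => by
    simp only [zero_add, Function.iterate_one, Function.iterate_zero, id]
    exact ⟨Tmap_of_half_lt hz.1, by linarith [hz.1], by linarith [hz.2]⟩
  | j + 1, hno => by
    obtain ⟨heq, hmem⟩ :=
      iterate_Tmap_succ hβ hz j fun i hi1 hij => hno i hi1 (hij.trans j.le_succ)
    have ht := mem_Ioc_zero_half_of_notMem hmem (heq ▸ hno (j + 1) le_add_self le_rfl)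
    rw [Function.iterate_succ_apply', heq, Function.iterate_succ_apply', Tmap_of_mem_Ioc ht]
    exact ⟨rfl, hmem.1.trans (lt_leftBranch (Ioc_zero_half_subset_Ioo ht)),
      (leftBranch_le_two_mul hβ ht).trans (by linarith [ht.2])⟩

theorem orbit_of_retTime_eq {γ z : ℝ} {n : ℕ} (hβ : 0 ≤ 1 / γ - 1)
    (hz : z ∈ Ioc (1 / 2 : ℝ) 1) (hR : retTime γ z = n + 1) :
    (Tmap γ)^[n + 1] z = (leftBranch (1 / γ - 1))^[n] (2 * z - 1) ∧
      (∀ j < n, (leftBranch (1 / γ - 1))^[j] (2 * z - 1) ∈ Ioc (0 : ℝ) (1 / 2)) ∧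
        1 / 2 < (leftBranch (1 / γ - 1))^[n] (2 * z - 1) := by
  obtain ⟨hret, hno⟩ := retTime_eq_succ_spec hR
  have horb (j : ℕ) (hj : j ≤ n) :=
    iterate_Tmap_succ hβ hz j fun i hi1 hij => hno i hi1 (hij.trans hj)
  refine ⟨(horb n le_rfl).1, fun j hj => ?_, (horb n le_rfl).1 ▸ hret.1⟩
  obtain ⟨heq, hmem⟩ := horb j hj.le
  exact mem_Ioc_zero_half_of_notMem hmem (heq ▸ hno (j + 1) le_add_self hj)

theorem hasDerivAt_iterate_leftBranch_two_mul_sub_one {z : ℝ} {n : ℕ}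
    (hz : ∀ j < n, (leftBranch β)^[j] (2 * z - 1) ∈ Ioc (0 : ℝ) (1 / 2)) :
    HasDerivAt (fun z => (leftBranch β)^[n] (2 * z - 1))
      ((∏ j ∈ Finset.range n, leftBranchDeriv β ((leftBranch β)^[j] (2 * z - 1))) * 2) z :=
  (hasDerivAt_iterate_of_forall fun j hj =>
    hasDerivAt_leftBranch (Ioc_zero_half_subset_Ioo (hz j hj))).comp z
    ((((hasDerivAt_id z).const_mul 2).sub_const 1).congr_deriv (mul_one 2))

end IntermittentMap

open IntermittentMap in
/-- Bounded distortion of the induced map: there is `C > 0` such that for all `x < y` in `Y`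
with the return time constant on `[x, y]`, if `T^{R(x)}` has strictly positive derivatives
`dx` at `x` and `dy` at `y`, then `|log dy - log dx| ≤ C |F(y) - F(x)|`. -/
theorem stmt1 (γ : ℝ) (hγ0 : 0 < γ) (hγ1 : γ ≤ 1) :
    ∃ C : ℝ, 0 < C ∧
      ∀ x y : ℝ, x ∈ Set.Ioc (1 / 2 : ℝ) 1 → y ∈ Set.Ioc (1 / 2 : ℝ) 1 → x < y →
        (∀ z ∈ Set.Icc x y, retTime γ z = retTime γ x) →
        ∀ dx dy : ℝ,
          HasDerivAt ((Tmap γ)^[retTime γ x]) dx x →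
          HasDerivAt ((Tmap γ)^[retTime γ x]) dy y →
          0 < dx → 0 < dy →
          |Real.log dy - Real.log dx| ≤ C * |indMap γ y - indMap γ x| := by
  have hβ : 0 ≤ 1 / γ - 1 := sub_nonneg.2 (one_le_one_div hγ0 hγ1)
  have hC := div_pos (distortionConst_pos hβ) (minStep_pos (β := 1 / γ - 1))
  refine ⟨_, hC, fun x y hx hy hxy hR dx dy hdx hdy hdx0 hdy0 => ?_⟩
  rcases h : retTime γ x with _ | n
  · rw [h, Function.iterate_zero] at hdx hdy
    rw [hdx.unique (hasDerivAt_id x), hdy.unique (hasDerivAt_id y), sub_self, abs_zero]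
    exact mul_nonneg hC.le (abs_nonneg _)
  have hyR : retTime γ y = n + 1 := (hR y ⟨hxy.le, le_rfl⟩).trans h
  obtain ⟨hTx, hax, hexit⟩ := orbit_of_retTime_eq hβ hx h
  obtain ⟨hTy, hay, -⟩ := orbit_of_retTime_eq hβ hy hyR
  have hagree : EqOn (Tmap γ)^[n + 1] (fun z => (leftBranch (1 / γ - 1))^[n] (2 * z - 1))
      (Icc x y) := fun z hz =>
    (orbit_of_retTime_eq hβ ⟨hx.1.trans_le hz.1, hz.2.trans hy.2⟩ ((hR z hz).trans h)).1
  rw [h] at hdx hdy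
  rw [HasDerivAt.eq_of_eqOn_Icc hxy ⟨le_rfl, hxy.le⟩ hagree hdx
    (hasDerivAt_iterate_leftBranch_two_mul_sub_one hax)] at hdx0 ⊢
  rw [HasDerivAt.eq_of_eqOn_Icc hxy ⟨hxy.le, le_rfl⟩ hagree hdy
    (hasDerivAt_iterate_leftBranch_two_mul_sub_one hay)] at hdy0 ⊢
  rw [indMap, indMap, h, hyR, hTx, hTy, log_mul (left_ne_zero_of_mul hdx0.ne') two_ne_zero,
    log_mul (left_ne_zero_of_mul hdy0.ne') two_ne_zero, add_sub_add_right_eq_sub]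
  exact abs_log_prod_leftBranchDeriv_sub_le hβ (by linarith) hax hay hexit
end

section
/- There exist constants η1, η2 > 0 such that for every integer n ≥ 1, e^{−η2 n^γ} ≤ m({x ∈ Y : R(x) ≥ n}) ≤ e^{−η1 n^γ}; that is, the first return time to Y has stretched exponential tails of order exactly γ with respect to Lebesgue measure. -/
/-!
On the left branch put `u = -log x ≥ log 2`; one step of `T` maps `u` to `u - log (1 + c / u^β)`
with `c / u^β ∈ (0, 1]`. Tangent-line estimates for the convex function `u ↦ u^{1/γ}` show that
the potential `depth = u^{1/γ}` drops by at most `c/γ` per step, and by at least `c/(γ 2^{1/γ})`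
while the orbit stays in `(0, 1/2]`. A point `x ∈ Y` has `R(x) > m` exactly when `T x = 2x - 1`
spends its first `m` iterates in `(0, 1/2]`; hence `R(x) > m` forces `depth (2x - 1) ≥ C m`, and
is implied by `depth (2x - 1) ≥ C' (m + 1)`. As `depth y ≥ B ↔ y ≤ exp (-B^γ)`, the tail
`{R > m}` is squeezed between two intervals `(1/2, (1 + exp (-(C m)^γ)) / 2]`.
-/

open MeasureTheory Set

open Real

lemma rpow_add_mul_sub_le_rpow {a b p : ℝ} (ha : 0 ≤ a) (hb : 0 < b) (hp : 1 ≤ p) :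
    b ^ p + p * b ^ (p - 1) * (a - b) ≤ a ^ p := by
  have hbp : 0 < b ^ p := rpow_pos_of_pos hb p
  have h := mul_le_mul_of_nonneg_right (one_add_mul_self_le_rpow_one_add
    (s := a / b - 1) (by linarith [div_nonneg ha hb.le]) hp) hbp.le
  rw [add_sub_cancel, div_rpow ha hb.le, div_mul_cancel₀ _ hbp.ne'] at h
  calc b ^ p + p * b ^ (p - 1) * (a - b) = (1 + p * (a / b - 1)) * b ^ p := by
        rw [rpow_sub_one hb.ne']; field_simp
    _ ≤ a ^ p := h

lemma half_le_log_one_add {t : ℝ} (h0 : 0 ≤ t) (h1 : t ≤ 1) : t / 2 ≤ log (1 + t) := by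
  have h := one_sub_inv_le_log_of_pos (x := 1 + t) (by linarith)
  have : t / 2 ≤ 1 - (1 + t)⁻¹ := by
    rw [inv_eq_one_div, le_sub_iff_add_le, ← le_sub_iff_add_le', div_le_iff₀ (by linarith)]
    nlinarith
  linarith

lemma log_two_rpow_div_rpow_mem_Ioc {β u : ℝ} (hβ : 0 ≤ β) (hu : log 2 ≤ u) :
    log 2 ^ β / u ^ β ∈ Ioc 0 1 := by
  have hl2 : 0 < log 2 := log_pos one_lt_two
  have hup : 0 < u ^ β := rpow_pos_of_pos (hl2.trans_le hu) β
  exact ⟨div_pos (rpow_pos_of_pos hl2 β) hup,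
    (div_le_one hup).2 (rpow_le_rpow hl2.le hu hβ)⟩

section LogStep

variable {p u : ℝ}

lemma rpow_le_rpow_sub_log_one_add_add (hp : 1 ≤ p) (hu : log 2 ≤ u) :
    u ^ p ≤ (u - log (1 + log 2 ^ (p - 1) / u ^ (p - 1))) ^ p + p * log 2 ^ (p - 1) := by
  set t := log 2 ^ (p - 1) / u ^ (p - 1) with ht
  obtain ⟨ht0, ht1⟩ := log_two_rpow_div_rpow_mem_Ioc (sub_nonneg.2 hp) hu
  have hu0 : 0 < u := (log_pos one_lt_two).trans_le hu
  have hlog_le_t : log (1 + t) ≤ t := by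
    linarith [log_le_sub_one_of_pos (x := 1 + t) (by linarith)]
  have hlog_le_two : log (1 + t) ≤ log 2 := log_le_log (by linarith) (by linarith)
  have hcut : u ^ (p - 1) * log (1 + t) ≤ log 2 ^ (p - 1) := by
    calc u ^ (p - 1) * log (1 + t) ≤ u ^ (p - 1) * t := by gcongr
      _ = log 2 ^ (p - 1) := by rw [ht]; field_simp
  have := rpow_add_mul_sub_le_rpow (a := u - log (1 + t)) (by linarith) hu0 hp
  nlinarith

lemma rpow_sub_log_one_add_add_le (hp : 1 ≤ p) (hu : log 2 ≤ u)
    (hu' : log 2 ≤ u - log (1 + log 2 ^ (p - 1) / u ^ (p - 1))) :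
    (u - log (1 + log 2 ^ (p - 1) / u ^ (p - 1))) ^ p + p * log 2 ^ (p - 1) / 2 ^ p ≤ u ^ p := by
  set t := log 2 ^ (p - 1) / u ^ (p - 1) with ht
  set u' := u - log (1 + t)
  obtain ⟨ht0, ht1⟩ := log_two_rpow_div_rpow_mem_Ioc (sub_nonneg.2 hp) hu
  have hu0 : 0 < u := (log_pos one_lt_two).trans_le hu
  have hlog_le_two : log (1 + t) ≤ log 2 := log_le_log (by linarith) (by linarith)
  -- `u' ≥ log 2` and `u' ≥ u - log 2` together give `u' ≥ u / 2`
  have hhalf : u / 2 ≤ u' := by linarith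
  have hgain : p * log 2 ^ (p - 1) / 2 ^ p ≤ p * (u' ^ (p - 1) * (u - u')) := by
    calc p * log 2 ^ (p - 1) / 2 ^ p = p * ((u / 2) ^ (p - 1) * (t / 2)) := by
          rw [ht, div_rpow hu0.le zero_le_two, rpow_sub_one two_ne_zero]
          field_simp
      _ ≤ p * (u' ^ (p - 1) * (u - u')) := by
          gcongr
          · exact rpow_nonneg (by linarith) _
          · simpa [u'] using half_le_log_one_add ht0.le ht1
  have := rpow_add_mul_sub_le_rpow (a := u) (b := u') hu0.le (by linarith) hp
  linarith

end LogStep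

section Potential

variable {α : Type*} {f : α → α} {s : Set α} {V : α → ℝ}

lemma apply_iterate_add_mul_le {δ : ℝ} (hδ : ∀ y ∈ s, f y ∈ s → V (f y) + δ ≤ V y) :
    ∀ (n : ℕ) {y : α}, (∀ j ≤ n, f^[j] y ∈ s) → V (f^[n] y) + n * δ ≤ V y
  | 0, _, _ => by simp
  | n + 1, y, hy => by
    have ih := apply_iterate_add_mul_le hδ n (y := f y) fun j hj => by
      simpa only [← Function.iterate_succ_apply] using hy (j + 1) (by omega)
    have hstep := hδ y (by simpa using hy 0 (by omega)) (by simpa using hy 1 (by omega))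
    rw [Function.iterate_succ_apply]
    push_cast
    linarith

lemma le_apply_iterate_add_mul {K : ℝ} (hK : ∀ y ∈ s, V y ≤ V (f y) + K) :
    ∀ (n : ℕ) {y : α}, (∀ j < n, f^[j] y ∈ s) → V y ≤ V (f^[n] y) + n * K
  | 0, _, _ => by simp
  | n + 1, y, hy => by
    have ih := le_apply_iterate_add_mul hK n (y := f y) fun j hj => by
      simpa only [← Function.iterate_succ_apply] using hy (j + 1) (by omega)
    have hstep := hK y (by simpa using hy 0 (by omega))
    rw [Function.iterate_succ_apply]
    push_cast
    linarith

end Potential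

variable {γ : ℝ}

lemma Tmap_of_mem_Ioc_half_one {x : ℝ} (hx : x ∈ Ioc (1 / 2) 1) : Tmap γ x = 2 * x - 1 := by
  rw [Tmap, if_neg (by linarith [hx.1]), if_neg (not_le.2 hx.1)]

lemma log_two_le_neg_log {y : ℝ} (hy : y ∈ Ioc 0 (1 / 2)) : log 2 ≤ -log y := by
  rw [le_neg, ← log_inv, ← one_div]
  exact log_le_log hy.1 hy.2

lemma Tmap_of_mem_Ioc_zero_half {y : ℝ} (hy : y ∈ Ioc 0 (1 / 2)) :
    Tmap γ y = y * (1 + log 2 ^ (1 / γ - 1) / (-log y) ^ (1 / γ - 1)) := by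
  rw [Tmap, if_neg (not_le.2 hy.1), if_pos hy.2,
    abs_of_neg (log_neg hy.1 (hy.2.trans_lt (by norm_num)))]

lemma neg_log_Tmap {y : ℝ} (hy : y ∈ Ioc 0 (1 / 2)) :
    -log (Tmap γ y) = -log y - log (1 + log 2 ^ (1 / γ - 1) / (-log y) ^ (1 / γ - 1)) := by
  have ht : 0 ≤ log 2 ^ (1 / γ - 1) / (-log y) ^ (1 / γ - 1) :=
    div_nonneg (rpow_nonneg (log_pos one_lt_two).le _)
      (rpow_nonneg ((log_pos one_lt_two).le.trans (log_two_le_neg_log hy)) _)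
  rw [Tmap_of_mem_Ioc_zero_half hy, log_mul hy.1.ne' (by linarith)]
  ring

lemma mapsTo_Tmap (hγ0 : 0 < γ) (hγ1 : γ ≤ 1) : MapsTo (Tmap γ) (Ioc 0 1) (Ioc 0 1) := by
  intro y hy
  rcases le_or_gt y (1 / 2) with hle | hgt
  · obtain ⟨ht0, ht1⟩ := log_two_rpow_div_rpow_mem_Ioc
      (sub_nonneg.2 (one_le_one_div hγ0 hγ1)) (log_two_le_neg_log ⟨hy.1, hle⟩)
    rw [Tmap_of_mem_Ioc_zero_half ⟨hy.1, hle⟩]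
    constructor <;> nlinarith [hy.1]
  · rw [Tmap_of_mem_Ioc_half_one ⟨hgt, hy.2⟩]
    constructor <;> linarith [hy.2]

noncomputable def depth (γ y : ℝ) : ℝ := (-log y) ^ (1 / γ)

noncomputable def depthDrop (γ : ℝ) : ℝ := 1 / γ * log 2 ^ (1 / γ - 1)

lemma depthDrop_pos (hγ0 : 0 < γ) : 0 < depthDrop γ :=
  mul_pos (one_div_pos.2 hγ0) (rpow_pos_of_pos (log_pos one_lt_two) _)

lemma depth_nonneg {y : ℝ} (hy : y ∈ Ioc 0 1) : 0 ≤ depth γ y :=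
  rpow_nonneg (neg_nonneg.2 (log_nonpos hy.1.le hy.2)) _

lemma le_depth_iff (hγ0 : 0 < γ) {B y : ℝ} (hB : 0 ≤ B) (hy : y ∈ Ioc 0 1) :
    B ≤ depth γ y ↔ y ≤ exp (-B ^ γ) := by
  rw [depth, one_div, le_rpow_inv_iff_of_pos hB (neg_nonneg.2 (log_nonpos hy.1.le hy.2)) hγ0,
    le_neg, log_le_iff_le_exp hy.1]

lemma le_depth_iff_le_half (hγ0 : 0 < γ) {y : ℝ} (hy : y ∈ Ioc 0 1) :
    log 2 ^ (1 / γ) ≤ depth γ y ↔ y ≤ 1 / 2 := by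
  rw [le_depth_iff hγ0 (rpow_nonneg (log_pos one_lt_two).le _) hy, one_div,
    rpow_inv_rpow (log_pos one_lt_two).le hγ0.ne', exp_neg, exp_log two_pos, one_div]

lemma depth_le_depth_Tmap_add (hγ0 : 0 < γ) (hγ1 : γ ≤ 1) {y : ℝ} (hy : y ∈ Ioc 0 (1 / 2)) :
    depth γ y ≤ depth γ (Tmap γ y) + depthDrop γ := by
  rw [depth, depth, neg_log_Tmap hy, depthDrop]
  exact rpow_le_rpow_sub_log_one_add_add (one_le_one_div hγ0 hγ1) (log_two_le_neg_log hy)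

lemma depth_Tmap_add_le (hγ0 : 0 < γ) (hγ1 : γ ≤ 1) {y : ℝ} (hy : y ∈ Ioc 0 (1 / 2))
    (hTy : Tmap γ y ∈ Ioc 0 (1 / 2)) :
    depth γ (Tmap γ y) + depthDrop γ / 2 ^ (1 / γ) ≤ depth γ y := by
  have hTy' := log_two_le_neg_log hTy
  rw [neg_log_Tmap hy] at hTy'
  rw [depth, depth, neg_log_Tmap hy, depthDrop]
  exact rpow_sub_log_one_add_add_le (one_le_one_div hγ0 hγ1) (log_two_le_neg_log hy) hTy'

-- the last step of an orbit inside `(0, 1/2]` is only controlled through `depth ≥ log 2 ^ (1/γ)`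
noncomputable def depthRate (γ : ℝ) : ℝ := min (depthDrop γ / 2 ^ (1 / γ)) (log 2 ^ (1 / γ))

lemma depthRate_pos (hγ0 : 0 < γ) : 0 < depthRate γ :=
  lt_min (div_pos (depthDrop_pos hγ0) (rpow_pos_of_pos two_pos _))
    (rpow_pos_of_pos (log_pos one_lt_two) _)

lemma mul_depthRate_le_depth (hγ0 : 0 < γ) (hγ1 : γ ≤ 1) {m : ℕ} {y : ℝ} (hy : y ∈ Ioc 0 1)
    (h : ∀ j < m, (Tmap γ)^[j] y ∈ Ioc 0 (1 / 2)) : m * depthRate γ ≤ depth γ y := by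
  cases m with
  | zero => simpa using depth_nonneg hy
  | succ k =>
    have hdrop := apply_iterate_add_mul_le (fun _ hz hTz => depth_Tmap_add_le hγ0 hγ1 hz hTz) k
      fun j hj => h j (by omega)
    have hlast := (le_depth_iff_le_half hγ0 (Ioc_subset_Ioc_right (by norm_num) (h k (by omega)))).2
      (h k (by omega)).2
    have hk : k * depthRate γ ≤ k * (depthDrop γ / 2 ^ (1 / γ)) := by
      gcongr
      exact min_le_left _ _
    have := min_le_right (depthDrop γ / 2 ^ (1 / γ)) (log 2 ^ (1 / γ))
    rw [depthRate] at hk ⊢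
    push_cast
    linarith

lemma iterate_mem_of_le_depth (hγ0 : 0 < γ) (hγ1 : γ ≤ 1) {m : ℕ} {y : ℝ} (hy : y ∈ Ioc 0 1)
    (h : m * depthDrop γ + log 2 ^ (1 / γ) ≤ depth γ y) :
    ∀ j ≤ m, (Tmap γ)^[j] y ∈ Ioc 0 (1 / 2) := by
  intro j hj
  induction j using Nat.strong_induction_on with
  | _ j ih =>
    have hmem := (mapsTo_Tmap hγ0 hγ1).iterate j hy
    have hK := le_apply_iterate_add_mul (f := Tmap γ) (V := depth γ)
      (fun _ hz => depth_le_depth_Tmap_add hγ0 hγ1 hz) j fun i hi => ih i hi (by omega)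
    have hjm : (j : ℝ) * depthDrop γ ≤ m * depthDrop γ := by
      gcongr
      exact (depthDrop_pos hγ0).le
    exact ⟨hmem.1, (le_depth_iff_le_half hγ0 hmem).1 (by linarith)⟩

lemma exists_iterate_mem_Ioc_half_one (hγ0 : 0 < γ) (hγ1 : γ ≤ 1) {y : ℝ} (hy : y ∈ Ioc 0 1) :
    ∃ k, (Tmap γ)^[k] y ∈ Ioc (1 / 2) 1 := by
  by_contra! h
  have hleft (j : ℕ) : (Tmap γ)^[j] y ∈ Ioc 0 (1 / 2) := by
    have hj := (mapsTo_Tmap hγ0 hγ1).iterate j hy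
    exact ⟨hj.1, not_lt.1 fun hlt => h j ⟨hlt, hj.2⟩⟩
  obtain ⟨m, hm⟩ := exists_nat_gt (depth γ y / depthRate γ)
  have := mul_depthRate_le_depth hγ0 hγ1 hy (m := m) fun j _ => hleft j
  rw [div_lt_iff₀ (depthRate_pos hγ0)] at hm
  linarith

lemma succ_le_retTime_iff (hγ0 : 0 < γ) (hγ1 : γ ≤ 1) {x : ℝ} (hx : x ∈ Ioc (1 / 2) 1)
    {m : ℕ} : m + 1 ≤ retTime γ x ↔ ∀ j < m, (Tmap γ)^[j] (2 * x - 1) ∈ Ioc 0 (1 / 2) := by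
  have hy : 2 * x - 1 ∈ Ioc 0 1 := ⟨by linarith [hx.1], by linarith [hx.2]⟩
  have hshift (j : ℕ) : (Tmap γ)^[j + 1] x = (Tmap γ)^[j] (2 * x - 1) := by
    rw [Function.iterate_succ_apply, Tmap_of_mem_Ioc_half_one hx]
  have hreturns : {k : ℕ | 1 ≤ k ∧ (Tmap γ)^[k] x ∈ Ioc (1 / 2) 1}.Nonempty := by
    obtain ⟨k, hk⟩ := exists_iterate_mem_Ioc_half_one hγ0 hγ1 hy
    exact ⟨k + 1, by omega, by rwa [hshift]⟩
  rw [retTime, le_csInf_iff' hreturns]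
  constructor
  · intro h j hj
    have hmem := (mapsTo_Tmap hγ0 hγ1).iterate j hy
    refine ⟨hmem.1, not_lt.1 fun hlt => ?_⟩
    have := h (a := j + 1) ⟨by omega, by rw [hshift]; exact ⟨hlt, hmem.2⟩⟩
    omega
  · rintro h k ⟨hk1, hk⟩
    obtain ⟨j, rfl⟩ : ∃ j, k = j + 1 := ⟨k - 1, by omega⟩
    by_contra! hlt
    rw [hshift] at hk
    exact absurd hk.1 (not_lt.2 (h j (by omega)).2)

lemma tail_subset_Ioc (hγ0 : 0 < γ) (hγ1 : γ ≤ 1) (m : ℕ) :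
    {x ∈ Ioc (1 / 2 : ℝ) 1 | m + 1 ≤ retTime γ x} ⊆
      Ioc (1 / 2) ((1 + exp (-(m * depthRate γ) ^ γ)) / 2) := by
  rintro x ⟨hx, hret⟩
  have hy : 2 * x - 1 ∈ Ioc 0 1 := ⟨by linarith [hx.1], by linarith [hx.2]⟩
  have hdepth := mul_depthRate_le_depth hγ0 hγ1 hy ((succ_le_retTime_iff hγ0 hγ1 hx).1 hret)
  have := (le_depth_iff hγ0 (by positivity [depthRate_pos hγ0]) hy).1 hdepth
  exact ⟨hx.1, by linarith⟩

lemma Ioc_subset_tail (hγ0 : 0 < γ) (hγ1 : γ ≤ 1) (m : ℕ) :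
    Ioc (1 / 2 : ℝ) ((1 + exp (-(m * depthDrop γ + log 2 ^ (1 / γ)) ^ γ)) / 2) ⊆
      {x ∈ Ioc (1 / 2 : ℝ) 1 | m + 1 ≤ retTime γ x} := by
  intro x hx
  have hB : 0 ≤ m * depthDrop γ + log 2 ^ (1 / γ) :=
    add_nonneg (mul_nonneg m.cast_nonneg (depthDrop_pos hγ0).le)
      (rpow_nonneg (log_pos one_lt_two).le _)
  have he := exp_le_one_iff.2 (neg_nonpos.2 (rpow_nonneg hB γ))
  have hxY : x ∈ Ioc (1 / 2) 1 := ⟨hx.1, by linarith [hx.2]⟩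
  have hy : 2 * x - 1 ∈ Ioc 0 1 := ⟨by linarith [hx.1], by linarith [hx.2]⟩
  have hdepth := (le_depth_iff hγ0 hB hy).2 (by linarith [hx.2])
  exact ⟨hxY, (succ_le_retTime_iff hγ0 hγ1 hxY).2 fun j hj =>
    iterate_mem_of_le_depth hγ0 hγ1 hy hdepth j hj.le⟩

lemma volume_Ioc_half_exp (s : ℝ) :
    volume (Ioc (1 / 2 : ℝ) ((1 + exp (-s)) / 2)) = ENNReal.ofReal (exp (-(s + log 2))) := by
  rw [Real.volume_Ioc, neg_add, exp_add, exp_neg (log 2), exp_log two_pos]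
  congr 1
  ring

lemma exists_volume_tail_le (hγ0 : 0 < γ) (hγ1 : γ ≤ 1) : ∃ η > 0, ∀ n : ℕ, 1 ≤ n →
    volume {x ∈ Ioc (1 / 2 : ℝ) 1 | n ≤ retTime γ x} ≤ ENNReal.ofReal (exp (-η * n ^ γ)) := by
  have ha := depthRate_pos hγ0
  refine ⟨min (depthRate γ ^ γ) (log 2), lt_min (rpow_pos_of_pos ha γ) (log_pos one_lt_two), ?_⟩
  intro n hn
  obtain ⟨m, rfl⟩ : ∃ m, n = m + 1 := ⟨n - 1, by omega⟩
  refine (measure_mono (tail_subset_Ioc hγ0 hγ1 m)).trans ?_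
  rw [volume_Ioc_half_exp, mul_rpow m.cast_nonneg ha.le]
  gcongr
  rw [neg_mul, neg_le_neg_iff]
  have hsub : ((m : ℝ) + 1) ^ γ ≤ (m : ℝ) ^ γ + 1 := by
    simpa using rpow_add_le_add_rpow m.cast_nonneg zero_le_one hγ0.le hγ1
  push_cast
  calc min (depthRate γ ^ γ) (log 2) * ((m : ℝ) + 1) ^ γ
      ≤ min (depthRate γ ^ γ) (log 2) * ((m : ℝ) ^ γ + 1) := by gcongr
    _ ≤ (m : ℝ) ^ γ * depthRate γ ^ γ + log 2 := by
      have := min_le_left (depthRate γ ^ γ) (log 2)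
      have := min_le_right (depthRate γ ^ γ) (log 2)
      have := rpow_nonneg m.cast_nonneg γ
      nlinarith

lemma exists_le_volume_tail (hγ0 : 0 < γ) (hγ1 : γ ≤ 1) : ∃ η > 0, ∀ n : ℕ, 1 ≤ n →
    ENNReal.ofReal (exp (-η * n ^ γ)) ≤ volume {x ∈ Ioc (1 / 2 : ℝ) 1 | n ≤ retTime γ x} := by
  have hK := depthDrop_pos hγ0
  have hL : 0 < log 2 ^ (1 / γ) := rpow_pos_of_pos (log_pos one_lt_two) _
  refine ⟨(depthDrop γ + log 2 ^ (1 / γ)) ^ γ + log 2, by positivity, ?_⟩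
  intro n hn
  obtain ⟨m, rfl⟩ : ∃ m, n = m + 1 := ⟨n - 1, by omega⟩
  refine le_trans ?_ (measure_mono (Ioc_subset_tail hγ0 hγ1 m))
  rw [volume_Ioc_half_exp]
  gcongr
  rw [neg_mul, neg_le_neg_iff]
  have hB : (m * depthDrop γ + log 2 ^ (1 / γ)) ^ γ
      ≤ ((m + 1 : ℝ) * (depthDrop γ + log 2 ^ (1 / γ))) ^ γ := by
    gcongr
    nlinarith [m.cast_nonneg (α := ℝ)]
  rw [mul_rpow (by positivity) (by positivity)] at hB
  have h1 : 1 ≤ ((m : ℝ) + 1) ^ γ := one_le_rpow (by linarith [m.cast_nonneg (α := ℝ)]) hγ0.le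
  push_cast
  nlinarith [log_pos one_lt_two]

/-- The first return time to `Y = (1/2, 1]` has stretched exponential tails of order
exactly `γ` with respect to Lebesgue measure: there are `η1, η2 > 0` such that for every
`n ≥ 1`, `e^{-η2 n^γ} ≤ m(R ≥ n) ≤ e^{-η1 n^γ}`. -/
theorem stmt2 (γ : ℝ) (hγ0 : 0 < γ) (hγ1 : γ ≤ 1) :
    ∃ η1 η2 : ℝ, 0 < η1 ∧ 0 < η2 ∧
      ∀ n : ℕ, 1 ≤ n →
        ENNReal.ofReal (Real.exp (-η2 * (n : ℝ) ^ γ)) ≤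
            volume {x ∈ Set.Ioc (1 / 2 : ℝ) 1 | n ≤ retTime γ x} ∧
        volume {x ∈ Set.Ioc (1 / 2 : ℝ) 1 | n ≤ retTime γ x} ≤
            ENNReal.ofReal (Real.exp (-η1 * (n : ℝ) ^ γ)) := by
  obtain ⟨η1, hη1, hupper⟩ := exists_volume_tail_le hγ0 hγ1
  obtain ⟨η2, hη2, hlower⟩ := exists_le_volume_tail hγ0 hγ1
  exact ⟨η1, η2, hη1, hη2, fun n hn => ⟨hlower n hn, hupper n hn⟩⟩
end

section
/- Let β ≥ 0, δ > 0, and let ν be a Borel probability measure on [0,1], absolutely continuous with respect to Lebesgue measure, whose density φ satisfies c1 ≤ |log x|^{−β} φ(x) ≤ c2 for Lebesgue-a.e. x ∈ (0, δ0], for some constants c1, c2, δ0 > 0. Define f(x) = |log x|^δ for x ∈ (0,1] and f(0) = 0. Then there exist constants A1, A2, B1, B2 > 0 such that for every t ≥ 1, A1 e^{−B1 t^{1/δ}} ≤ ν({x : f(x) > t}) ≤ A2 e^{−B2 t^{1/δ}}. -/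
open MeasureTheory Set

/-- The unbounded observable `f(x) = |log x|^δ` for `x ∈ (0,1]`, `f(0) = 0`. -/
noncomputable def logObs (δ : ℝ) (x : ℝ) : ℝ :=
  if x ≤ 0 then 0 else |Real.log x| ^ δ

private lemma aux_rpow_le_exp (β : ℝ) (hβ : 0 ≤ β) {u : ℝ} (hu : 0 < u) :
    u ^ β ≤ (2 * β + 2) ^ β * Real.exp (u / 2) := by
  have hM : (0:ℝ) < 2 * β + 2 := by linarith
  rw [Real.rpow_def_of_pos hu, Real.rpow_def_of_pos hM, ← Real.exp_add]
  apply Real.exp_le_exp.mpr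
  rcases le_or_gt u (2 * β + 2) with h | h
  · have h1 : Real.log u ≤ Real.log (2 * β + 2) := Real.log_le_log hu h
    nlinarith [mul_le_mul_of_nonneg_right h1 hβ, hu.le]
  · have h1 : Real.log u ≤ u / (2 * β + 2) + Real.log (2 * β + 2) := by
      have h2 := Real.log_le_sub_one_of_pos (show 0 < u / (2 * β + 2) by positivity)
      have h3 : Real.log (u / (2 * β + 2)) = Real.log u - Real.log (2 * β + 2) :=
        Real.log_div hu.ne' hM.ne'
      linarith
    have h4 : β * (u / (2 * β + 2)) ≤ u / 2 := by
      rw [mul_div_assoc', div_le_div_iff₀ hM (by norm_num)]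
      nlinarith
    nlinarith [mul_le_mul_of_nonneg_right h1 hβ]

/-- If `ν` is a Borel probability measure on `[0,1]` whose density `φ` w.r.t. Lebesgue
satisfies `c1 ≤ |log x|^{-β} φ(x) ≤ c2` a.e. on `(0, δ0]`, then the observable
`f(x) = |log x|^δ` has stretched exponential tails:
`A1 e^{-B1 t^{1/δ}} ≤ ν(f > t) ≤ A2 e^{-B2 t^{1/δ}}` for `t ≥ 1`. -/
theorem stmt8 (β : ℝ) (hβ : 0 ≤ β) (δ : ℝ) (hδ : 0 < δ)
    (φ : ℝ → ℝ) (ν : Measure ℝ) [IsProbabilityMeasure ν]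
    (hν : ν = (volume.restrict (Set.Icc (0 : ℝ) 1)).withDensity fun x => ENNReal.ofReal (φ x))
    (c1 c2 δ0 : ℝ) (hc1 : 0 < c1) (hc2 : 0 < c2) (hδ0 : 0 < δ0)
    (hdens : ∀ᵐ x ∂(volume.restrict (Set.Ioc (0 : ℝ) δ0)),
      c1 ≤ |Real.log x| ^ (-β) * φ x ∧ |Real.log x| ^ (-β) * φ x ≤ c2) :
    ∃ A1 A2 B1 B2 : ℝ, 0 < A1 ∧ 0 < A2 ∧ 0 < B1 ∧ 0 < B2 ∧
      ∀ t : ℝ, 1 ≤ t →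
        ENNReal.ofReal (A1 * Real.exp (-B1 * t ^ (1 / δ))) ≤ ν {x | t < logObs δ x} ∧
        ν {x | t < logObs δ x} ≤ ENNReal.ofReal (A2 * Real.exp (-B2 * t ^ (1 / δ))) := by
  set T0 : ℝ := max 1 (-Real.log δ0) with hT0def
  have hT0one : (1:ℝ) ≤ T0 := le_max_left _ _
  set Cβ : ℝ := (2 * β + 2) ^ β with hCβ
  have hCβpos : 0 < Cβ := Real.rpow_pos_of_pos (by linarith) β
  have hmeas : Measurable (logObs δ) := by
    unfold logObs
    exact Measurable.ite (measurableSet_le measurable_id measurable_const)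
      measurable_const ((Real.measurable_log.abs).pow_const δ)
  -- the tail set intersected with [0,1]
  have hset : ∀ t : ℝ, 1 ≤ t →
      {x : ℝ | t < logObs δ x} ∩ Icc 0 1 = Ioo 0 (Real.exp (-(t ^ (1/δ)))) := by
    intro t ht
    have ht0 : (0:ℝ) ≤ t := by linarith
    have hT1 : (1:ℝ) ≤ t ^ (1/δ) := by
      calc (1:ℝ) = 1 ^ (1/δ) := (Real.one_rpow _).symm
        _ ≤ t ^ (1/δ) := Real.rpow_le_rpow (by norm_num) ht (by positivity)
    ext x
    simp only [mem_inter_iff, mem_setOf_eq, mem_Icc, mem_Ioo]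
    constructor
    · rintro ⟨ht', hx0, hx1⟩
      have hxpos : 0 < x := by
        rcases lt_or_ge 0 x with h | h
        · exact h
        · exfalso; simp only [logObs, if_pos h] at ht'; linarith
      refine ⟨hxpos, ?_⟩
      simp only [logObs, if_neg (not_le.mpr hxpos)] at ht'
      have hLnn : 0 ≤ |Real.log x| := abs_nonneg _
      have hTL : t ^ (1/δ) < |Real.log x| := by
        rw [one_div]
        exact (Real.rpow_inv_lt_iff_of_pos ht0 hLnn hδ).mpr ht'
      have hlogneg : Real.log x ≤ 0 := Real.log_nonpos hx0 hx1
      have hlt : Real.log x < -(t ^ (1/δ)) := by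
        rw [abs_of_nonpos hlogneg] at hTL; linarith
      calc x = Real.exp (Real.log x) := (Real.exp_log hxpos).symm
        _ < Real.exp (-(t ^ (1/δ))) := Real.exp_lt_exp.mpr hlt
    · rintro ⟨hx0, hxa⟩
      have hx1 : x < 1 := lt_of_lt_of_le hxa (by
        calc Real.exp (-(t ^ (1/δ))) ≤ Real.exp 0 := Real.exp_le_exp.mpr (by linarith)
          _ = 1 := Real.exp_zero)
      refine ⟨?_, hx0.le, hx1.le⟩
      simp only [logObs, if_neg (not_le.mpr hx0)]
      have hlog : Real.log x < -(t ^ (1/δ)) := by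
        have := Real.log_lt_log hx0 hxa
        rwa [Real.log_exp] at this
      have hTL : t ^ (1/δ) < |Real.log x| := by
        rw [abs_of_nonpos (by linarith : Real.log x ≤ 0)]; linarith
      rw [one_div] at hTL
      exact (Real.rpow_inv_lt_iff_of_pos ht0 (abs_nonneg _) hδ).mp hTL
  -- value of ν on the tail set
  have hνeq : ∀ t : ℝ, 1 ≤ t → ν {x : ℝ | t < logObs δ x}
      = ∫⁻ x in Ioo 0 (Real.exp (-(t ^ (1/δ)))), ENNReal.ofReal (φ x) := by
    intro t ht
    have hS : MeasurableSet {x : ℝ | t < logObs δ x} := measurableSet_lt measurable_const hmeas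
    rw [hν, withDensity_apply _ hS, Measure.restrict_restrict hS, hset t ht]
  -- facts about points of `Ioo 0 (exp (-T))` for `T ≥ T0`
  have hfacts : ∀ T : ℝ, T0 ≤ T → ∀ x ∈ Ioo (0:ℝ) (Real.exp (-T)),
      T ≤ |Real.log x| ∧ 0 < |Real.log x| := by
    intro T hT x hx
    have hlog : Real.log x < -T := by
      have := Real.log_lt_log hx.1 hx.2
      rwa [Real.log_exp] at this
    have habs : |Real.log x| = -Real.log x := abs_of_nonpos (by nlinarith [hT0one.trans hT])
    constructor
    · rw [habs]; linarith
    · rw [habs]; nlinarith [hT0one.trans hT]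
  have hsubδ0 : ∀ T : ℝ, T0 ≤ T → Ioo (0:ℝ) (Real.exp (-T)) ⊆ Ioc 0 δ0 := by
    intro T hT x hx
    refine ⟨hx.1, hx.2.le.trans ?_⟩
    calc Real.exp (-T) ≤ Real.exp (Real.log δ0) := by
          apply Real.exp_le_exp.mpr
          have : -Real.log δ0 ≤ T := le_trans (le_max_right _ _) hT
          linarith
      _ = δ0 := Real.exp_log hδ0
  -- lower core estimate
  have lower_core : ∀ T : ℝ, T0 ≤ T →
      ENNReal.ofReal (c1 * Real.exp (-T)) ≤
        ∫⁻ x in Ioo 0 (Real.exp (-T)), ENNReal.ofReal (φ x) := by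
    intro T hT
    have hae : ∀ᵐ x ∂(volume.restrict (Ioo (0:ℝ) (Real.exp (-T)))),
        ENNReal.ofReal c1 ≤ ENNReal.ofReal (φ x) := by
      filter_upwards [ae_restrict_of_ae_restrict_of_subset (hsubδ0 T hT) hdens,
        ae_restrict_mem measurableSet_Ioo] with x hx hxm
      obtain ⟨hL1, hLpos⟩ := hfacts T hT x hxm
      have hL1' : (1:ℝ) ≤ |Real.log x| := le_trans (hT0one.trans hT) hL1
      have h2 := mul_le_mul_of_nonneg_left hx.1 (Real.rpow_nonneg (abs_nonneg (Real.log x)) β)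
      rw [← mul_assoc, ← Real.rpow_add hLpos] at h2
      simp only [add_neg_cancel, Real.rpow_zero, one_mul] at h2
      have h3 : (1:ℝ) ≤ |Real.log x| ^ β := Real.one_le_rpow hL1' hβ
      exact ENNReal.ofReal_le_ofReal (le_trans (by nlinarith) h2)
    calc ENNReal.ofReal (c1 * Real.exp (-T))
        = ENNReal.ofReal c1 * volume (Ioo 0 (Real.exp (-T))) := by
          rw [Real.volume_Ioo, sub_zero, ENNReal.ofReal_mul hc1.le]
      _ = ∫⁻ _ in Ioo 0 (Real.exp (-T)), ENNReal.ofReal c1 := (setLIntegral_const _ _).symm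
      _ ≤ ∫⁻ x in Ioo 0 (Real.exp (-T)), ENNReal.ofReal (φ x) := lintegral_mono_ae hae
  -- upper core estimate
  have upper_core : ∀ T : ℝ, T0 ≤ T →
      (∫⁻ x in Ioo 0 (Real.exp (-T)), ENNReal.ofReal (φ x)) ≤
        ENNReal.ofReal (2 * c2 * Cβ * Real.exp (-(T/2))) := by
    intro T hT
    set a : ℝ := Real.exp (-T) with hadef
    have hapos : 0 < a := Real.exp_pos _
    have hae : ∀ᵐ x ∂(volume.restrict (Ioo (0:ℝ) a)),
        ENNReal.ofReal (φ x) ≤ ENNReal.ofReal (c2 * Cβ * x ^ (-(1/2) : ℝ)) := by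
      filter_upwards [ae_restrict_of_ae_restrict_of_subset (hsubδ0 T hT) hdens,
        ae_restrict_mem measurableSet_Ioo] with x hx hxm
      obtain ⟨_, hLpos⟩ := hfacts T hT x hxm
      have h2 := mul_le_mul_of_nonneg_left hx.2 (Real.rpow_nonneg (abs_nonneg (Real.log x)) β)
      rw [← mul_assoc, ← Real.rpow_add hLpos] at h2
      simp only [add_neg_cancel, Real.rpow_zero, one_mul] at h2
      -- h2 : φ x ≤ |log x| ^ β * c2
      have h3 : |Real.log x| ^ β ≤ Cβ * Real.exp (|Real.log x| / 2) :=
        aux_rpow_le_exp β hβ hLpos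
      have h4 : Real.exp (|Real.log x| / 2) = x ^ (-(1/2) : ℝ) := by
        rw [abs_of_nonpos (by
          have := Real.log_lt_log hxm.1 hxm.2
          rw [Real.log_exp] at this
          nlinarith [hT0one.trans hT] : Real.log x ≤ 0)]
        rw [Real.rpow_def_of_pos hxm.1]
        ring_nf
      apply ENNReal.ofReal_le_ofReal
      calc φ x ≤ |Real.log x| ^ β * c2 := h2
        _ ≤ (Cβ * Real.exp (|Real.log x| / 2)) * c2 :=
            mul_le_mul_of_nonneg_right h3 hc2.le
        _ = c2 * Cβ * x ^ (-(1/2) : ℝ) := by rw [h4]; ring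
    have hInt : IntegrableOn (fun x : ℝ => c2 * Cβ * x ^ (-(1/2) : ℝ)) (Ioo 0 a) := by
      apply Integrable.const_mul
      have h := intervalIntegral.intervalIntegrable_rpow' (a := 0) (b := a)
        (r := (-(1/2) : ℝ)) (by norm_num)
      rw [intervalIntegrable_iff_integrableOn_Ioc_of_le hapos.le] at h
      exact h.mono_set Ioo_subset_Ioc_self
    have hval : ∫ x in Ioo 0 a, c2 * Cβ * x ^ (-(1/2) : ℝ) = 2 * c2 * Cβ * Real.exp (-(T/2)) := by
      rw [MeasureTheory.integral_const_mul, ← integral_Ioc_eq_integral_Ioo,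
        ← intervalIntegral.integral_of_le hapos.le,
        integral_rpow (Or.inl (by norm_num))]
      have h0 : ((0:ℝ)) ^ ((-(1/2):ℝ) + 1) = 0 := Real.zero_rpow (by norm_num)
      have ha2 : a ^ ((-(1/2):ℝ) + 1) = Real.exp (-(T/2)) := by
        rw [hadef, ← Real.exp_mul]
        congr 1; ring
      rw [h0, ha2]
      ring
    calc (∫⁻ x in Ioo 0 a, ENNReal.ofReal (φ x))
        ≤ ∫⁻ x in Ioo 0 a, ENNReal.ofReal (c2 * Cβ * x ^ (-(1/2) : ℝ)) := lintegral_mono_ae hae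
      _ = ENNReal.ofReal (∫ x in Ioo 0 a, c2 * Cβ * x ^ (-(1/2) : ℝ)) := by
          rw [← ofReal_integral_eq_lintegral_ofReal hInt]
          filter_upwards [ae_restrict_mem measurableSet_Ioo] with x hx
          exact mul_nonneg (mul_nonneg hc2.le hCβpos.le) (Real.rpow_nonneg hx.1.le _)
      _ = ENNReal.ofReal (2 * c2 * Cβ * Real.exp (-(T/2))) := by rw [hval]
  -- assemble
  refine ⟨c1 * Real.exp (1 - T0), max 1 (2 * c2 * Cβ) * Real.exp (T0 / 2), 1, 1/2,
    by positivity, by positivity, one_pos, by norm_num, ?_⟩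
  intro t ht
  set T : ℝ := t ^ (1/δ) with hTdef
  have hT1 : (1:ℝ) ≤ T := by
    calc (1:ℝ) = 1 ^ (1/δ) := (Real.one_rpow _).symm
      _ ≤ t ^ (1/δ) := Real.rpow_le_rpow (by norm_num) ht (by positivity)
  have heq := hνeq t ht
  constructor
  · -- lower bound
    rcases le_or_gt T0 T with h | h
    · refine le_trans ?_ (heq ▸ lower_core T h)
      apply ENNReal.ofReal_le_ofReal
      calc c1 * Real.exp (1 - T0) * Real.exp (-1 * T)
          = c1 * Real.exp (1 - T0 + -1 * T) := by rw [mul_assoc, ← Real.exp_add]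
        _ ≤ c1 * Real.exp (-T) :=
            mul_le_mul_of_nonneg_left (Real.exp_le_exp.mpr (by linarith)) hc1.le
    · -- T < T0 : use monotonicity with threshold T0 ^ δ
      have htle : t ≤ T0 ^ δ := by
        have : T ^ δ ≤ T0 ^ δ := Real.rpow_le_rpow (by linarith) h.le hδ.le
        rwa [hTdef, one_div, Real.rpow_inv_rpow (by linarith) hδ.ne'] at this
      have hT0t : (1:ℝ) ≤ T0 ^ δ := Real.one_le_rpow hT0one hδ.le
      have hsub : {x : ℝ | T0 ^ δ < logObs δ x} ⊆ {x : ℝ | t < logObs δ x} :=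
        fun x hx => lt_of_le_of_lt htle hx
      have hmono : ν {x : ℝ | T0 ^ δ < logObs δ x} ≤ ν {x : ℝ | t < logObs δ x} :=
        measure_mono hsub
      have hexp : (T0 ^ δ) ^ (1/δ) = T0 := by
        rw [one_div]; exact Real.rpow_rpow_inv (by linarith) hδ.ne'
      have hlow := lower_core T0 le_rfl
      have heq0 := hνeq (T0 ^ δ) hT0t
      rw [hexp] at heq0
      refine le_trans ?_ (le_trans (heq0 ▸ hlow) hmono)
      apply ENNReal.ofReal_le_ofReal
      calc c1 * Real.exp (1 - T0) * Real.exp (-1 * T)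
          = c1 * Real.exp (1 - T0 + -1 * T) := by rw [mul_assoc, ← Real.exp_add]
        _ ≤ c1 * Real.exp (-T0) :=
            mul_le_mul_of_nonneg_left (Real.exp_le_exp.mpr (by linarith)) hc1.le
  · -- upper bound
    rcases le_or_gt T0 T with h | h
    · refine le_trans (heq ▸ upper_core T h) (ENNReal.ofReal_le_ofReal ?_)
      have e1 : Real.exp (-(1/2) * T) = Real.exp (-(T/2)) := by congr 1; ring
      rw [e1]
      have h1 : 2 * c2 * Cβ ≤ max 1 (2 * c2 * Cβ) * Real.exp (T0 / 2) :=
        le_trans (le_max_right _ _) (le_mul_of_one_le_right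
          (le_trans zero_le_one (le_max_left _ _)) (Real.one_le_exp (by linarith)))
      exact mul_le_mul_of_nonneg_right h1 (Real.exp_pos _).le
    · have hle1 : ν {x : ℝ | t < logObs δ x} ≤ 1 := by
        calc ν {x : ℝ | t < logObs δ x} ≤ ν univ := measure_mono (subset_univ _)
          _ = 1 := measure_univ
      refine le_trans hle1 ?_
      rw [← ENNReal.ofReal_one]
      apply ENNReal.ofReal_le_ofReal
      have e2 : Real.exp (T0/2) * Real.exp (-(1/2) * T) = Real.exp ((T0 - T) / 2) := by
        rw [← Real.exp_add]; congr 1; ring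
      calc (1:ℝ) ≤ Real.exp ((T0 - T) / 2) := Real.one_le_exp (by linarith)
        _ = 1 * (Real.exp (T0/2) * Real.exp (-(1/2) * T)) := by rw [e2, one_mul]
        _ ≤ max 1 (2 * c2 * Cβ) * (Real.exp (T0/2) * Real.exp (-(1/2) * T)) :=
            mul_le_mul_of_nonneg_right (le_max_left _ _) (by positivity)
        _ = max 1 (2 * c2 * Cβ) * Real.exp (T0/2) * Real.exp (-(1/2) * T) := by ring
end

section
/- Let δ ∈ (0,1) and ε ∈ (0,1). Define f_ε : [0,1] → ℝ by f_ε(x) = |log ε|^δ for x ∈ [0, ε] and f_ε(x) = |log x|^δ for x ∈ (ε, 1]. Then f_ε is δ-Hölder with constant ε^{−δ}; that is, |f_ε(x) − f_ε(y)| ≤ ε^{−δ} |x − y|^δ for all x, y ∈ [0,1]. -/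
open MeasureTheory Set

/-- The truncated observable `f_ε(x) = |log ε|^δ` on `[0, ε]` and `|log x|^δ` on `(ε, 1]`. -/
noncomputable def fTrunc (δ ε : ℝ) (x : ℝ) : ℝ :=
  if x ≤ ε then |Real.log ε| ^ δ else |Real.log x| ^ δ

/-!
Writing `x' = max x ε`, we have `f_ε x = |log x'|^δ`. The map `x ↦ x'` is `1`-Lipschitz, `log` is
`ε⁻¹`-Lipschitz on `[ε, ∞)`, `|·|` is `1`-Lipschitz, and `t ↦ t^δ` is `δ`-Hölder with constant `1`
on `[0, ∞)` because it is subadditive there. Composing these gives the bound, even for all real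
`x, y`.
-/

namespace Real

theorem rpow_sub_rpow_le_abs_sub_rpow {a b δ : ℝ} (ha : 0 ≤ a) (hb : 0 ≤ b)
    (hδ₀ : 0 ≤ δ) (hδ₁ : δ ≤ 1) : a ^ δ - b ^ δ ≤ |a - b| ^ δ := by
  have : a ^ δ ≤ b ^ δ + |a - b| ^ δ :=
    calc a ^ δ ≤ (b + |a - b|) ^ δ := by gcongr; linarith [le_abs_self (a - b)]
      _ ≤ b ^ δ + |a - b| ^ δ := rpow_add_le_add_rpow hb (abs_nonneg _) hδ₀ hδ₁
  linarith

theorem abs_rpow_sub_rpow_le {a b δ : ℝ} (ha : 0 ≤ a) (hb : 0 ≤ b)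
    (hδ₀ : 0 ≤ δ) (hδ₁ : δ ≤ 1) : |a ^ δ - b ^ δ| ≤ |a - b| ^ δ :=
  abs_sub_le_iff.2 ⟨rpow_sub_rpow_le_abs_sub_rpow ha hb hδ₀ hδ₁,
    abs_sub_comm a b ▸ rpow_sub_rpow_le_abs_sub_rpow hb ha hδ₀ hδ₁⟩

theorem log_sub_log_le_sub_div {u v : ℝ} (hu : 0 < u) (hv : 0 < v) :
    log u - log v ≤ (u - v) / v := by
  rw [← log_div hu.ne' hv.ne', sub_div, div_self hv.ne']
  exact log_le_sub_one_of_pos (div_pos hu hv)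

theorem abs_log_sub_log_le_div {ε a b : ℝ} (hε : 0 < ε) (ha : ε ≤ a) (hb : ε ≤ b) :
    |log a - log b| ≤ |a - b| / ε := by
  have key : ∀ u v : ℝ, ε ≤ u → ε ≤ v → log u - log v ≤ |u - v| / ε := fun u v hu hv =>
    calc log u - log v ≤ (u - v) / v := log_sub_log_le_sub_div (hε.trans_le hu) (hε.trans_le hv)
      _ ≤ |u - v| / v := div_le_div_of_nonneg_right (le_abs_self _) (hε.trans_le hv).le
      _ ≤ |u - v| / ε := by gcongr
  exact abs_sub_le_iff.2 ⟨key a b ha hb, abs_sub_comm a b ▸ key b a hb ha⟩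

end Real

open Real

theorem fTrunc_eq_abs_log_max (δ ε x : ℝ) : fTrunc δ ε x = |log (max x ε)| ^ δ := by
  unfold fTrunc
  split_ifs with h
  · rw [max_eq_right h]
  · rw [max_eq_left (le_of_not_ge h)]

theorem abs_fTrunc_sub_fTrunc_le {δ ε : ℝ} (hδ₀ : 0 ≤ δ) (hδ₁ : δ ≤ 1) (hε : 0 < ε) (x y : ℝ) :
    |fTrunc δ ε x - fTrunc δ ε y| ≤ ε ^ (-δ) * |x - y| ^ δ := by
  rw [fTrunc_eq_abs_log_max, fTrunc_eq_abs_log_max]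
  calc |(|log (max x ε)|) ^ δ - (|log (max y ε)|) ^ δ|
      ≤ |(|log (max x ε)| - |log (max y ε)|)| ^ δ :=
        abs_rpow_sub_rpow_le (abs_nonneg _) (abs_nonneg _) hδ₀ hδ₁
    _ ≤ |log (max x ε) - log (max y ε)| ^ δ :=
        rpow_le_rpow (abs_nonneg _) (abs_abs_sub_abs_le_abs_sub _ _) hδ₀
    _ ≤ (|max x ε - max y ε| / ε) ^ δ := by
        gcongr; exact abs_log_sub_log_le_div hε (le_max_right _ _) (le_max_right _ _)
    _ ≤ (|x - y| / ε) ^ δ := by gcongr (?_ / _) ^ _; exact abs_max_sub_max_le_abs x y ε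
    _ = ε ^ (-δ) * |x - y| ^ δ := by
        rw [div_rpow (abs_nonneg _) hε.le, rpow_neg hε.le, div_eq_inv_mul]

/-- For `δ ∈ (0,1)` and `ε ∈ (0,1)`, the truncated observable `f_ε` is `δ`-Hölder on `[0,1]`
with constant `ε^{-δ}`. -/
theorem stmt10 (δ ε : ℝ) (hδ : δ ∈ Set.Ioo (0 : ℝ) 1) (hε : ε ∈ Set.Ioo (0 : ℝ) 1) :
    ∀ x ∈ Set.Icc (0 : ℝ) 1, ∀ y ∈ Set.Icc (0 : ℝ) 1,
      |fTrunc δ ε x - fTrunc δ ε y| ≤ ε ^ (-δ) * |x - y| ^ δ :=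
  fun x _ y _ => abs_fTrunc_sub_fTrunc_le hδ.1.le hδ.2.le hε.1 x y
end

section
/- Let δ > 0, β ≥ 0, and let ν be a Borel probability measure on [0,1], absolutely continuous with respect to Lebesgue measure, whose density φ satisfies φ(x) ≤ C(1 + |log x|^β) for Lebesgue-a.e. x ∈ (0,1], for some C > 0. Let f(x) = |log x|^δ for x ∈ (0,1], f(0) = 0, and let f_ε be the truncated observable. Then there exists C̃ > 0 such that for every ε ∈ (0, e^{−1}), ∫_{[0,1]} |f − f_ε| dν ≤ C̃ ε (1 + |log ε|)^{δ+β}. -/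
open MeasureTheory Set

lemma aux_poly_exp (γ u t : ℝ) (hγ : 0 < γ) (hu : 1 ≤ u) (ht : 0 ≤ t) :
    (u + t) ^ γ ≤ (max (2*γ) 1) ^ γ * u ^ γ * Real.exp (t/2) := by
  set a : ℝ := max (2*γ) 1 with ha_def
  have ha1 : 1 ≤ a := le_max_right _ _
  have ha2 : 2*γ ≤ a := le_max_left _ _
  have ha0 : 0 < a := lt_of_lt_of_le one_pos ha1
  have hu0 : 0 < u := lt_of_lt_of_le one_pos hu
  have h1 : u + t ≤ u * (a * Real.exp (t/a)) := by
    have e1 : u + t ≤ u * (1 + t) := by nlinarith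
    have e2 : 1 + t ≤ a * (1 + t/a) := by
      have : a * (1 + t/a) = a + t := by field_simp
      rw [this]; linarith
    have e3 : 1 + t/a ≤ Real.exp (t/a) := by
      have := Real.add_one_le_exp (t/a); linarith
    calc u + t ≤ u * (1 + t) := e1
      _ ≤ u * (a * (1 + t/a)) := by
          apply mul_le_mul_of_nonneg_left _ hu0.le
          nlinarith
      _ ≤ u * (a * Real.exp (t/a)) := by
          apply mul_le_mul_of_nonneg_left _ hu0.le
          exact mul_le_mul_of_nonneg_left e3 ha0.le
  have h2 : (u + t) ^ γ ≤ (u * (a * Real.exp (t/a))) ^ γ :=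
    Real.rpow_le_rpow (by linarith) h1 hγ.le
  calc (u + t) ^ γ ≤ (u * (a * Real.exp (t/a))) ^ γ := h2
    _ = u ^ γ * (a ^ γ * (Real.exp (t/a)) ^ γ) := by
        rw [Real.mul_rpow hu0.le (by positivity), Real.mul_rpow ha0.le (Real.exp_pos _).le]
    _ = u ^ γ * (a ^ γ * Real.exp (t/a * γ)) := by rw [← Real.exp_mul]
    _ ≤ u ^ γ * (a ^ γ * Real.exp (t/2)) := by
        apply mul_le_mul_of_nonneg_left _ (by positivity)
        apply mul_le_mul_of_nonneg_left _ (by positivity)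
        apply Real.exp_le_exp.2
        rw [div_mul_eq_mul_div, div_le_div_iff₀ ha0 two_pos]
        nlinarith
    _ = a ^ γ * u ^ γ * Real.exp (t/2) := by ring

lemma aux_int (ε : ℝ) (hε : 0 < ε) :
    ∫ x in Ioc (0:ℝ) ε, x ^ (-(1:ℝ)/2) = 2 * ε ^ ((1:ℝ)/2) := by
  rw [← intervalIntegral.integral_of_le hε.le]
  rw [integral_rpow (Or.inl (by norm_num))]
  rw [Real.zero_rpow (by norm_num)]
  norm_num
  rw [div_eq_mul_inv]
  norm_num
  ring

lemma meas_abslog_rpow (δ : ℝ) : Measurable fun x : ℝ => |Real.log x| ^ δ := by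
  measurability

/-- If the density `φ` of `ν` satisfies `φ(x) ≤ C (1 + |log x|^β)` a.e. on `(0,1]`, then
there is `C̃ > 0` such that for every `ε ∈ (0, e⁻¹)`,
`∫_{[0,1]} |f - f_ε| dν ≤ C̃ ε (1 + |log ε|)^{δ+β}`. -/
theorem stmt11 (δ β : ℝ) (hδ : 0 < δ) (hβ : 0 ≤ β)
    (φ : ℝ → ℝ) (ν : Measure ℝ) [IsProbabilityMeasure ν]
    (hν : ν = (volume.restrict (Set.Icc (0 : ℝ) 1)).withDensity fun x => ENNReal.ofReal (φ x))
    (C : ℝ) (hC : 0 < C)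
    (hdens : ∀ᵐ x ∂(volume.restrict (Set.Ioc (0 : ℝ) 1)),
      φ x ≤ C * (1 + |Real.log x| ^ β)) :
    ∃ Ctilde : ℝ, 0 < Ctilde ∧
      ∀ ε : ℝ, ε ∈ Set.Ioo (0 : ℝ) (Real.exp (-1)) →
        ∫ x in Set.Icc (0 : ℝ) 1, |logObs δ x - fTrunc δ ε x| ∂ν ≤
          Ctilde * ε * (1 + |Real.log ε|) ^ (δ + β) := by
  have hγ : 0 < δ + β := by linarith
  set K : ℝ := (max (2*(δ+β)) 1) ^ (δ+β) with hK_def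
  have hK : 0 < K := Real.rpow_pos_of_pos (lt_of_lt_of_le one_pos (le_max_right _ _)) _
  refine ⟨4 * C * K, by positivity, ?_⟩
  rintro ε ⟨hε0, hε1⟩
  have hεe : ε < 1 := hε1.trans (by
    rw [Real.exp_lt_one_iff]; norm_num)
  have hlogε : Real.log ε < -1 := by
    have h := Real.log_lt_log hε0 hε1
    rwa [Real.log_exp] at h
  have habsε : |Real.log ε| = -Real.log ε := abs_of_neg (by linarith)
  set μ := volume.restrict (Icc (0:ℝ) 1) with hμ
  set b : ℝ → ℝ := fun x => C * (1 + |Real.log x| ^ β) with hb_def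
  set g : ℝ → ℝ := fun x => |logObs δ x - fTrunc δ ε x| with hg_def
  set M : ℝ := 2*C*K*(1 + |Real.log ε|) ^ (δ+β) * ε ^ ((1:ℝ)/2) with hM_def
  have hM0 : 0 ≤ M := by positivity
  have hb_meas : Measurable fun x => ENNReal.ofReal (b x) := by
    apply ENNReal.measurable_ofReal.comp
    rw [hb_def]
    exact measurable_const.mul (measurable_const.add (meas_abslog_rpow β))
  have hg_meas : Measurable g := by
    rw [hg_def]
    unfold logObs fTrunc
    apply Measurable.abs
    apply Measurable.sub
    · exact Measurable.ite (measurableSet_le measurable_id measurable_const)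
        measurable_const (meas_abslog_rpow δ)
    · exact Measurable.ite (measurableSet_le measurable_id measurable_const)
        measurable_const (meas_abslog_rpow δ)
  have hres : ν.restrict (Icc (0:ℝ) 1) = μ.withDensity (fun x => ENNReal.ofReal (φ x)) := by
    rw [hν, MeasureTheory.restrict_withDensity measurableSet_Icc, hμ,
      Measure.restrict_restrict measurableSet_Icc, inter_self]
  have hdens' : ∀ᵐ x ∂μ, ENNReal.ofReal (φ x) ≤ ENNReal.ofReal (b x) := by
    have h : volume.restrict (Ioc (0:ℝ) 1) = μ := Measure.restrict_congr_set Ioc_ae_eq_Icc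
    rw [← h]
    filter_upwards [hdens] with x hx using ENNReal.ofReal_le_ofReal hx
  have hmono : μ.withDensity (fun x => ENNReal.ofReal (φ x))
      ≤ μ.withDensity (fun x => ENNReal.ofReal (b x)) := withDensity_mono hdens'
  have h0 : ∀ᵐ x ∂μ, x ≠ 0 := by
    rw [ae_iff]
    have hset : {x : ℝ | ¬ x ≠ 0} = {(0:ℝ)} := by ext x; simp
    rw [hset, hμ, Measure.restrict_apply (measurableSet_singleton 0)]
    exact measure_mono_null inter_subset_left (by simp)
  have hpt : ∀ᵐ x ∂μ, ENNReal.ofReal (b x) * ENNReal.ofReal (g x)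
      ≤ ENNReal.ofReal (M * (Ioc (0:ℝ) ε).indicator (fun y => y ^ (-(1:ℝ)/2)) x) := by
    have hmem : ∀ᵐ x ∂μ, x ∈ Icc (0:ℝ) 1 := by
      rw [hμ]; exact ae_restrict_mem measurableSet_Icc
    filter_upwards [hmem, h0] with x hx hx0
    by_cases hxε : x ≤ ε
    · have hx0' : 0 < x := lt_of_le_of_ne hx.1 (Ne.symm hx0)
      have hxIoc : x ∈ Ioc (0:ℝ) ε := ⟨hx0', hxε⟩
      rw [indicator_of_mem hxIoc]
      have hbnn : (0:ℝ) ≤ b x := by rw [hb_def]; positivity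
      rw [← ENNReal.ofReal_mul hbnn]
      apply ENNReal.ofReal_le_ofReal
      have hlx : Real.log x ≤ 0 := Real.log_nonpos hx0'.le hx.2
      have habsx : |Real.log x| = -Real.log x := abs_of_nonpos hlx
      have hlexx : |Real.log ε| ≤ |Real.log x| := by
        rw [habsx, habsε]
        have := Real.log_le_log hx0' hxε
        linarith
      have hg_le : g x ≤ |Real.log x| ^ δ := by
        rw [hg_def]
        simp only
        rw [logObs, fTrunc, if_neg (not_le.2 hx0'), if_pos hxε]
        have hr : |Real.log ε| ^ δ ≤ |Real.log x| ^ δ :=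
          Real.rpow_le_rpow (abs_nonneg _) hlexx hδ.le
        have hr0 : (0:ℝ) ≤ |Real.log ε| ^ δ := Real.rpow_nonneg (abs_nonneg _) δ
        rw [abs_of_nonneg (by linarith)]
        linarith
      have hgnn : (0:ℝ) ≤ g x := by rw [hg_def]; exact abs_nonneg _
      have hl0 : (0:ℝ) ≤ |Real.log x| := abs_nonneg _
      have h1β : 1 + |Real.log x| ^ β ≤ 2 * (1 + |Real.log x|) ^ β := by
        have e1 : |Real.log x| ^ β ≤ (1 + |Real.log x|) ^ β :=
          Real.rpow_le_rpow hl0 (by linarith) hβ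
        have e2 : (1:ℝ) ≤ (1 + |Real.log x|) ^ β := by
          calc (1:ℝ) = 1 ^ β := (Real.one_rpow β).symm
            _ ≤ (1 + |Real.log x|) ^ β := Real.rpow_le_rpow zero_le_one (by linarith) hβ
        linarith
      have h1δ : |Real.log x| ^ δ ≤ (1 + |Real.log x|) ^ δ :=
        Real.rpow_le_rpow hl0 (by linarith) hδ.le
      have hprod : b x * g x ≤ 2 * C * (1 + |Real.log x|) ^ (δ+β) := by
        have hbx : b x = C * (1 + |Real.log x| ^ β) := by rw [hb_def]
        calc b x * g x ≤ b x * (|Real.log x| ^ δ) := by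
              apply mul_le_mul_of_nonneg_left hg_le hbnn
          _ ≤ (C * (2 * (1 + |Real.log x|) ^ β)) * ((1 + |Real.log x|) ^ δ) := by
              rw [hbx]
              apply mul_le_mul (mul_le_mul_of_nonneg_left h1β hC.le) h1δ
                (Real.rpow_nonneg hl0 δ) (by positivity)
          _ = 2 * C * ((1 + |Real.log x|) ^ β * (1 + |Real.log x|) ^ δ) := by ring
          _ = 2 * C * (1 + |Real.log x|) ^ (δ+β) := by
              rw [← Real.rpow_add (by linarith : (0:ℝ) < 1 + |Real.log x|), add_comm β δ]
      have hu1 : (1:ℝ) ≤ 1 + |Real.log ε| := by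
        have := abs_nonneg (Real.log ε); linarith
      have haux := aux_poly_exp (δ+β) (1 + |Real.log ε|) (|Real.log x| - |Real.log ε|)
        hγ hu1 (by linarith)
      have hsum : (1 + |Real.log ε|) + (|Real.log x| - |Real.log ε|) = 1 + |Real.log x| := by
        ring
      rw [hsum] at haux
      have hexp : Real.exp ((|Real.log x| - |Real.log ε|)/2)
          = ε ^ ((1:ℝ)/2) * x ^ (-(1:ℝ)/2) := by
        rw [Real.rpow_def_of_pos hε0, Real.rpow_def_of_pos hx0', ← Real.exp_add]
        congr 1
        rw [habsx, habsε]
        ring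
      rw [hexp] at haux
      calc b x * g x ≤ 2*C*(1 + |Real.log x|) ^ (δ+β) := hprod
        _ ≤ 2*C*(K * (1 + |Real.log ε|) ^ (δ+β) * (ε ^ ((1:ℝ)/2) * x ^ (-(1:ℝ)/2))) := by
            apply mul_le_mul_of_nonneg_left _ (by positivity)
            rw [hK_def]
            exact haux.trans_eq (by ring)
        _ = M * x ^ (-(1:ℝ)/2) := by rw [hM_def]; ring
    · have hg0 : g x = 0 := by
        rw [hg_def]
        simp only
        rw [logObs, fTrunc, if_neg (not_le.2 (lt_trans hε0 (not_le.1 hxε))),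
          if_neg hxε, sub_self, abs_zero]
      rw [hg0]
      simp
  have hL : ∫⁻ x in Icc (0:ℝ) 1, ENNReal.ofReal (g x) ∂ν
      ≤ ENNReal.ofReal (4 * C * K * ε * (1 + |Real.log ε|) ^ (δ+β)) := by
    have hfin : ∀ᵐ x ∂μ, (fun x => ENNReal.ofReal (b x)) x < ⊤ :=
      Filter.Eventually.of_forall fun x => ENNReal.ofReal_lt_top
    calc ∫⁻ x in Icc (0:ℝ) 1, ENNReal.ofReal (g x) ∂ν
        = ∫⁻ x, ENNReal.ofReal (g x) ∂(μ.withDensity fun x => ENNReal.ofReal (φ x)) := by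
          rw [hres]
      _ ≤ ∫⁻ x, ENNReal.ofReal (g x) ∂(μ.withDensity fun x => ENNReal.ofReal (b x)) :=
          lintegral_mono' hmono le_rfl
      _ = ∫⁻ x, ENNReal.ofReal (b x) * ENNReal.ofReal (g x) ∂μ := by
          rw [lintegral_withDensity_eq_lintegral_mul_non_measurable μ hb_meas hfin]
          simp only [Pi.mul_apply]
      _ ≤ ∫⁻ x, ENNReal.ofReal (M * (Ioc (0:ℝ) ε).indicator (fun y => y ^ (-(1:ℝ)/2)) x) ∂μ :=
          lintegral_mono_ae hpt
      _ = ∫⁻ x, ENNReal.ofReal M *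
            (Ioc (0:ℝ) ε).indicator (fun y => ENNReal.ofReal (y ^ (-(1:ℝ)/2))) x ∂μ := by
          apply lintegral_congr
          intro x
          rw [ENNReal.ofReal_mul hM0]
          congr 1
          by_cases hxm : x ∈ Ioc (0:ℝ) ε
          · simp [indicator_of_mem hxm]
          · simp [indicator_of_notMem hxm]
      _ = ENNReal.ofReal M *
            ∫⁻ x, (Ioc (0:ℝ) ε).indicator (fun y => ENNReal.ofReal (y ^ (-(1:ℝ)/2))) x ∂μ :=
          lintegral_const_mul' _ _ ENNReal.ofReal_ne_top
      _ = ENNReal.ofReal M * ∫⁻ x in Ioc (0:ℝ) ε, ENNReal.ofReal (x ^ (-(1:ℝ)/2)) ∂μ := by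
          rw [lintegral_indicator measurableSet_Ioc]
      _ = ENNReal.ofReal M * ∫⁻ x in Ioc (0:ℝ) ε, ENNReal.ofReal (x ^ (-(1:ℝ)/2)) ∂volume := by
          congr 1
          rw [hμ, Measure.restrict_restrict measurableSet_Ioc,
            inter_eq_left.2 (Ioc_subset_Icc_self.trans (Icc_subset_Icc le_rfl hεe.le))]
      _ = ENNReal.ofReal M * ENNReal.ofReal (∫ x in Ioc (0:ℝ) ε, x ^ (-(1:ℝ)/2)) := by
          rw [← ofReal_integral_eq_lintegral_ofReal]
          · exact (intervalIntegrable_iff_integrableOn_Ioc_of_le hε0.le).1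
              (intervalIntegral.intervalIntegrable_rpow' (by norm_num))
          · filter_upwards [ae_restrict_mem measurableSet_Ioc] with x hx using
              Real.rpow_nonneg hx.1.le _
      _ = ENNReal.ofReal M * ENNReal.ofReal (2 * ε ^ ((1:ℝ)/2)) := by rw [aux_int ε hε0]
      _ = ENNReal.ofReal (M * (2 * ε ^ ((1:ℝ)/2))) := (ENNReal.ofReal_mul hM0).symm
      _ = ENNReal.ofReal (4 * C * K * ε * (1 + |Real.log ε|) ^ (δ+β)) := by
          congr 1
          have hhalf : ε ^ ((1:ℝ)/2) * ε ^ ((1:ℝ)/2) = ε := by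
            rw [← Real.rpow_add hε0]; norm_num
          calc M * (2 * ε ^ ((1:ℝ)/2))
              = 4*C*K*(1 + |Real.log ε|) ^ (δ+β) * (ε ^ ((1:ℝ)/2) * ε ^ ((1:ℝ)/2)) := by
                rw [hM_def]; ring
            _ = 4 * C * K * ε * (1 + |Real.log ε|) ^ (δ+β) := by rw [hhalf]; ring
  have hnn : 0 ≤ᵐ[ν.restrict (Icc (0:ℝ) 1)] g :=
    Filter.Eventually.of_forall fun x => by rw [hg_def]; exact abs_nonneg _
  have hgoal : ∫ x in Icc (0:ℝ) 1, |logObs δ x - fTrunc δ ε x| ∂ν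
      = ∫ x in Icc (0:ℝ) 1, g x ∂ν := by rw [hg_def]
  rw [hgoal, integral_eq_lintegral_of_nonneg_ae hnn hg_meas.aestronglyMeasurable]
  exact ENNReal.toReal_le_of_le_ofReal (by positivity) hL
end
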